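/- arXiv:1509.05291 — 3 statements merged into one kernel-verified Lean document; each statement's English description precedes it below -/
import Mathlib

section
/- Suppose κ = 2^λ for some cardinal λ < κ. Then E^κ_{μ-club} on κ^κ is reducible to the λ-fold product Π_λ E^2_{μ-club} on (2^κ)^λ: there is a function F : κ^κ → (2^κ)^λ such that f E^κ_{μ-club} g iff for every γ < λ, F(f)_γ E^2_{μ-club} F(g)_γ. -/
open Set Cardinal

/-- `A ⊆ κ` is a `μ`-club: unbounded in `κ` and closed under suprema of
strictly increasing sequences of order type `μ`. -/
def IsMuClub (κ μ : Cardinal.{0}) (A : Set Ordinal.{0}) : Prop :=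
  A ⊆ Set.Iio κ.ord ∧
  (∀ β < κ.ord, ∃ α ∈ A, β < α) ∧
  ∀ s : Ordinal → Ordinal, StrictMonoOn s (Set.Iio μ.ord) →
    (∀ i < μ.ord, s i ∈ A) → sSup (s '' Set.Iio μ.ord) ∈ A

/-- `E^κ_{μ-club}` on `κ^κ`. -/
def EMuClub (κ μ : Cardinal.{0}) (f g : Ordinal → Ordinal) : Prop :=
  ∃ A : Set Ordinal, IsMuClub κ μ A ∧ ∀ α ∈ A, f α = g α

/-- `E^2_{μ-club}` on `2^κ` (functions `κ → Bool`). -/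
def EMuClubBool (κ μ : Cardinal.{0}) (f g : Ordinal → Bool) : Prop :=
  ∃ A : Set Ordinal, IsMuClub κ μ A ∧ ∀ α ∈ A, f α = g α

/-!
Coding each ordinal below `κ = 2 ^ λ` by `λ` bits, `f` and `g` agree on a set exactly where all
their bit sequences agree, so the reduction comes down to: an intersection of `λ < κ` many
`μ`-clubs is a `μ`-club. For unboundedness above `β`, let `next c` bound a point of each club
above `c`, and build by recursion a `μ`-sequence `s` above `β` with `next (s j) ≤ s i` for
`j < i`. In each club the chosen points above the `s i` interleave with `s`, so `sup s` lies in
every club.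
-/

universe u v

theorem Cardinal.IsRegular.iSup_lt_ord {κ : Cardinal.{v}} (hκ : κ.IsRegular) {ι : Type u}
    {f : ι → Ordinal.{v}} (hι : Cardinal.lift.{v} #ι < Cardinal.lift.{u} κ)
    (hf : ∀ i, f i < κ.ord) : ⨆ i, f i < κ.ord :=
  Ordinal.lift_iSup_lt_of_lt_cof (by rwa [← Ordinal.lift_cof, hκ.cof_ord]) hf

noncomputable def supRec (b : Ordinal.{u}) (next : Ordinal.{u} → Ordinal.{u}) :
    Ordinal.{u} → Ordinal.{u} :=
  Ordinal.lt_wf.fix fun i s => max b (⨆ j : Iio i, next (s j j.2))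

section supRec

variable {b : Ordinal.{u}} {next : Ordinal.{u} → Ordinal.{u}}

theorem supRec_eq (i : Ordinal.{u}) :
    supRec b next i = max b (⨆ j : Iio i, next (supRec b next j)) :=
  Ordinal.lt_wf.fix_eq _ i

theorem le_supRec (i : Ordinal.{u}) : b ≤ supRec b next i :=
  (supRec_eq i).symm ▸ le_max_left _ _

theorem next_supRec_le {i j : Ordinal.{u}} (hji : j < i) :
    next (supRec b next j) ≤ supRec b next i := by
  rw [supRec_eq i]
  exact (le_ciSup Ordinal.bddAbove_of_small (⟨j, hji⟩ : Iio i)).trans (le_max_right _ _)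

theorem supRec_lt_ord {κ : Cardinal.{u}} (hκ : κ.IsRegular) (hb : b < κ.ord)
    (hnext : ∀ c < κ.ord, next c < κ.ord) {i : Ordinal.{u}} (hi : i < κ.ord) :
    supRec b next i < κ.ord := by
  induction i using WellFoundedLT.induction with
  | _ i ih =>
    rw [supRec_eq i]
    refine max_lt hb (hκ.iSup_lt_ord ?_ fun j => hnext _ (ih j j.2 (j.2.trans hi)))
    rwa [mk_Iio_ordinal, lift_lift, lift_lt, ← lt_ord]

end supRec

/-- `a` and `s` interleave, so they have the same supremum. -/
theorem IsMuClub.sSup_mem_of_interleave {κ μ : Cardinal.{0}} {A : Set Ordinal.{0}}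
    (hA : IsMuClub κ μ A) (hμ : ℵ₀ ≤ μ) {s a : Ordinal → Ordinal}
    (ha : ∀ i < μ.ord, a i ∈ A) (hsa : ∀ i < μ.ord, s i < a i)
    (has : ∀ j i, j < i → i < μ.ord → a j ≤ s i) : sSup (s '' Iio μ.ord) ∈ A := by
  have hlim := isSuccLimit_ord hμ
  have hne : (Iio μ.ord).Nonempty := ⟨0, hlim.pos⟩
  have hmono : StrictMonoOn a (Iio μ.ord) := fun j _ i hi hji =>
    (has j i hji hi).trans_lt (hsa i hi)
  have hsup : sSup (a '' Iio μ.ord) = sSup (s '' Iio μ.ord) := by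
    apply le_antisymm <;> refine csSup_le (hne.image _) ?_ <;> rintro _ ⟨i, hi, rfl⟩
    · have hsi : Order.succ i < μ.ord := hlim.succ_lt hi
      exact (has i _ (Order.lt_succ i) hsi).trans
        (le_csSup Ordinal.bddAbove_of_small (mem_image_of_mem s hsi))
    · exact (hsa i hi).le.trans (le_csSup Ordinal.bddAbove_of_small (mem_image_of_mem a hi))
  exact hsup ▸ hA.2.2 a hmono ha

theorem IsMuClub.exists_gt_mem_fun {κ μ : Cardinal.{0}} {A : Set Ordinal.{0}}
    (hA : IsMuClub κ μ A) : ∃ p : Ordinal → Ordinal, ∀ c < κ.ord, p c ∈ A ∧ c < p c := by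
  classical
  exact ⟨fun c => if hc : c < κ.ord then (hA.2.1 c hc).choose else 0, fun c hc => by
    simpa only [dif_pos hc] using (hA.2.1 c hc).choose_spec⟩

theorem exists_gt_mem_iInter_of_isMuClub {κ μ : Cardinal.{0}} (hκ : κ.IsRegular) (hμ : ℵ₀ ≤ μ)
    (hμκ : μ < κ) {ι : Type u} [Nonempty ι] (hι : lift.{0} #ι < lift.{u} κ)
    {A : ι → Set Ordinal} (hA : ∀ γ, IsMuClub κ μ (A γ)) {β : Ordinal} (hβ : β < κ.ord) :
    ∃ α ∈ ⋂ γ, A γ, β < α := by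
  choose p hp using fun γ => (hA γ).exists_gt_mem_fun
  set next : Ordinal → Ordinal := fun c => ⨆ γ, p γ c
  have hp_lt (γ : ι) {c : Ordinal} (hc : c < κ.ord) : p γ c < κ.ord := (hA γ).1 (hp γ c hc).1
  have hp_le (γ : ι) {c : Ordinal} (hc : c < κ.ord) : p γ c ≤ next c :=
    le_ciSup ⟨κ.ord, forall_mem_range.2 fun γ => (hp_lt γ hc).le⟩ γ
  have hnext (c : Ordinal) (hc : c < κ.ord) : next c < κ.ord := hκ.iSup_lt_ord hι (hp_lt · hc)
  set s := supRec β next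
  have hs (i : Ordinal) (hi : i < μ.ord) : s i < κ.ord :=
    supRec_lt_ord hκ hβ hnext (hi.trans (ord_lt_ord.2 hμκ))
  have hmem (γ : ι) : sSup (s '' Iio μ.ord) ∈ A γ :=
    (hA γ).sSup_mem_of_interleave hμ (a := fun i => p γ (s i))
      (fun i hi => (hp γ _ (hs i hi)).1) (fun i hi => (hp γ _ (hs i hi)).2)
      fun j i hji hi => (hp_le γ (hs j (hji.trans hi))).trans (next_supRec_le hji)
  have h0 : 0 < μ.ord := (isSuccLimit_ord hμ).pos
  have h1 : 1 < μ.ord := by simpa using (isSuccLimit_ord hμ).succ_lt h0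
  obtain ⟨γ⟩ := ‹Nonempty ι›
  refine ⟨_, mem_iInter.2 hmem, ?_⟩
  calc β ≤ s 0 := le_supRec 0
    _ < p γ (s 0) := (hp γ _ (hs 0 h0)).2
    _ ≤ next (s 0) := hp_le γ (hs 0 h0)
    _ ≤ s 1 := next_supRec_le zero_lt_one
    _ ≤ sSup (s '' Iio μ.ord) := le_csSup Ordinal.bddAbove_of_small (mem_image_of_mem s h1)

theorem isMuClub_iInter {κ μ : Cardinal.{0}} (hκ : κ.IsRegular) (hμ : ℵ₀ ≤ μ) (hμκ : μ < κ)
    {ι : Type u} [Nonempty ι] (hι : lift.{0} #ι < lift.{u} κ) {A : ι → Set Ordinal}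
    (hA : ∀ γ, IsMuClub κ μ (A γ)) : IsMuClub κ μ (⋂ γ, A γ) :=
  ⟨(iInter_subset _ (Classical.arbitrary ι)).trans (hA _).1,
    fun _ hβ => exists_gt_mem_iInter_of_isMuClub hκ hμ hμκ hι hA hβ,
    fun s hs hsA => mem_iInter.2 fun γ => (hA γ).2.2 s hs fun i hi => mem_iInter.1 (hsA i hi) γ⟩

theorem exists_injective_bool_code {κ lam : Cardinal.{u}} (h : κ ≤ 2 ^ lam) :
    ∃ G : Ordinal.{u} → Ordinal.{u} → Bool, ∀ x < κ.ord, ∀ y < κ.ord,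
      (∀ γ < lam.ord, G x γ = G y γ) → x = y := by
  have hcard : #(Iio κ.ord) ≤ #(Iio lam.ord → Bool) := by
    rw [mk_arrow, mk_Iio_ordinal, mk_Iio_ordinal, card_ord, card_ord, mk_bool, lift_two,
      lift_lift, ← lift_two.{u + 1, u}, ← lift_power, lift_le]
    exact h
  obtain ⟨e⟩ := (le_def _ _).1 hcard
  classical
  refine ⟨fun x γ => if hx : x < κ.ord then
      if hγ : γ < lam.ord then e ⟨x, hx⟩ ⟨γ, hγ⟩ else false else false,
    fun x hx y hy hxy => ?_⟩
  have he : e ⟨x, hx⟩ = e ⟨y, hy⟩ := funext fun γ => by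
    have hγ : (γ : Ordinal) < lam.ord := γ.2
    simpa [dif_pos hx, dif_pos hy, dif_pos hγ] using hxy γ hγ
  exact congrArg Subtype.val (e.injective he)

theorem eMuClub_reducible_prod_general (κ lam μ : Cardinal.{0}) (hκ : κ.IsRegular)
    (hμ : μ.IsRegular) (hμκ : μ < κ) (hlam : lam < κ) (h2 : κ = 2 ^ lam) :
    ∃ F : (Ordinal → Ordinal) → (Ordinal → Ordinal → Bool),
      ∀ f g : Ordinal → Ordinal,
        (∀ α < κ.ord, f α < κ.ord) → (∀ α < κ.ord, g α < κ.ord) →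
        (EMuClub κ μ f g ↔ ∀ γ < lam.ord, EMuClubBool κ μ (F f γ) (F g γ)) := by
  obtain ⟨G, hG⟩ := exists_injective_bool_code h2.le
  have hlam0 : lam ≠ 0 := by
    rintro rfl
    exact (hκ.aleph0_le.trans_eq (h2.trans (power_zero _))).not_gt one_lt_aleph0
  have : Nonempty (Iio lam.ord) := ⟨⟨0, ord_pos.2 (pos_iff_ne_zero.2 hlam0)⟩⟩
  refine ⟨fun f γ α => G (f α) γ, fun f g hf hg => ⟨?_, fun h => ?_⟩⟩
  · rintro ⟨A, hA, hfg⟩ γ -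
    exact ⟨A, hA, fun α hα => congrArg (G · γ) (hfg α hα)⟩
  · choose A hA hfg using fun γ : Iio lam.ord => h γ γ.2
    have hB := isMuClub_iInter hκ hμ.aleph0_le hμκ (by simpa [mk_Iio_ordinal]) hA
    refine ⟨⋂ γ, A γ, hB, fun α hα => hG _ (hf α (hB.1 hα)) _ (hg α (hB.1 hα)) fun γ hγ => ?_⟩
    exact hfg ⟨γ, hγ⟩ α (mem_iInter.1 hα _)

/-- If `κ = 2^λ` with `λ < κ`, then `E^κ_{μ-club}` reduces to the `λ`-fold
product `Π_λ E^2_{μ-club}` on `(2^κ)^λ`: there is `F` such that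
`f E^κ_{μ-club} g` iff `F(f)_γ E^2_{μ-club} F(g)_γ` for every `γ < λ`. -/
theorem eMuClub_reducible_prod (κ lam μ : Cardinal.{0}) (hκ : κ.IsRegular) (hκω : ℵ₀ < κ)
    (hμ : μ.IsRegular) (hμκ : μ < κ) (hlam : lam < κ) (h2 : κ = 2 ^ lam) :
    ∃ F : (Ordinal → Ordinal) → (Ordinal → Ordinal → Bool),
      ∀ f g : Ordinal → Ordinal,
        (∀ α < κ.ord, f α < κ.ord) → (∀ α < κ.ord, g α < κ.ord) →
        (EMuClub κ μ f g ↔ ∀ γ < lam.ord, EMuClubBool κ μ (F f γ) (F g γ)) :=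
  eMuClub_reducible_prod_general κ lam μ hκ hμ hμκ hlam h2
end

section
/- Suppose (t₀,c₀) and (t₁,c₁) are isomorphic coloured trees and I = (I_α)_{α<κ}, J = (J_α)_{α<κ} are good filtrations of t₀ and t₁ respectively. Then the associated functions H_{I,t₀} and H_{J,t₁} in κ^κ are E^κ_{ω-club} equivalent. -/
/-!
The stages `α` at which the tree isomorphism carries `I α` onto `J α` form an `ω`-club. Indeed,
`F '' I` and `J` are two `κ`-filtrations of `t₁`; by regularity of `κ` each stage of one is
contained in some stage of the other, so every `β < κ` starts an interleaved `ω`-sequence, and by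
continuity both filtrations agree at its supremum. At such a stage `F` maps `B_α` for `I` onto
`B_α` for `J` (it preserves restrictions and height `ω`) and respects the colours, so the two
functions `H` agree there.
-/

open Set Cardinal

/-- A node of the tree `κ^{≤ω}`: a sequence of ordinals whose domain is a
downward closed subset of `ℕ` (so a function from some `s ≤ ω` to the ordinals). -/
def Node : Type 1 :=
  { f : ℕ → Option Ordinal.{0} // ∀ m n : ℕ, m ≤ n → f n ≠ none → f m ≠ none }

namespace Node

/-- The tree (end-extension) order on nodes. -/
def le (x y : Node) : Prop := ∀ n a, x.1 n = some a → y.1 n = some a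

/-- The restriction `x↾k` of a node to its first `k` values. -/
def restrict (x : Node) (k : ℕ) : Node :=
  ⟨fun m => if m < k then x.1 m else none, by
    intro m n hmn h
    simp only [ne_eq] at h ⊢
    by_cases hn : n < k
    · have hm : m < k := lt_of_le_of_lt hmn hn
      rw [if_pos hm]
      exact x.2 m n hmn (by rwa [if_pos hn] at h)
    · rw [if_neg hn] at h
      exact absurd rfl h⟩

/-- A node has height `ω` iff it is defined at every `n < ω`. -/
def full (x : Node) : Prop := ∀ n, x.1 n ≠ none

/-- All entries of the node are `< δ` (the node lies in `δ^{≤ω}`). -/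
def entriesLt (x : Node) (δ : Ordinal) : Prop := ∀ n a, x.1 n = some a → a < δ

end Node

/-- A set of nodes is a chain w.r.t. the tree order. -/
def IsChainLe (b : Set Node) : Prop := ∀ x ∈ b, ∀ y ∈ b, Node.le x y ∨ Node.le y x

/-- A (maximal) branch of the tree `t`. -/
def IsMaxBranch (t b : Set Node) : Prop :=
  b ⊆ t ∧ IsChainLe b ∧ ∀ c : Set Node, b ⊆ c → c ⊆ t → IsChainLe c → c = b

/-- A filtration of a tree `t ⊆ κ^{≤ω}`. -/
def IsTreeFiltration (κ : Cardinal.{0}) (t : Set Node) (I : Ordinal → Set Node) : Prop :=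
  (∀ α < κ.ord, I α ⊆ t) ∧
  (∀ α < κ.ord, ∀ x ∈ I α, ∀ k, x.restrict k ∈ I α) ∧
  (∀ α < κ.ord, #(I α) < Cardinal.lift.{1} κ) ∧
  (∀ α β : Ordinal, α < β → β < κ.ord → I α ⊆ I β) ∧
  (∀ γ < κ.ord, Order.IsSuccLimit γ → I γ = ⋃ (α : Ordinal) (_ : α < γ), I α) ∧
  (⋃ (α : Ordinal) (_ : α < κ.ord), I α) = t

/-- `B_α`: the nodes of height `ω` of `t` that are not in `I α` although all
their finite restrictions are. -/
def Bset (t : Set Node) (I : Ordinal → Set Node) (α : Ordinal) : Set Node :=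
  {x | x ∈ t ∧ x.full ∧ x ∉ I α ∧ ∀ n : ℕ, x.restrict n ∈ I α}

/-- A filtration is good if the colouring is constant on each nonempty `B_α`. -/
def IsGoodFiltration (κ : Cardinal.{0}) (t : Set Node) (c : Node → Ordinal)
    (I : Ordinal → Set Node) : Prop :=
  IsTreeFiltration κ t I ∧ ∀ α < κ.ord, ∀ x ∈ Bset t I α, ∀ y ∈ Bset t I α, c x = c y

open scoped Classical in
/-- The function `H_{I,t} ∈ κ^κ` attached to a filtration of a coloured tree. -/
noncomputable def Hfun (t : Set Node) (c : Node → Ordinal) (I : Ordinal → Set Node) :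
    Ordinal → Ordinal := fun α =>
  if h : (Bset t I α).Nonempty ∧ ∀ x ∈ Bset t I α, ∀ y ∈ Bset t I α, c x = c y then
    c h.1.choose
  else 0

/-- `E^κ_{ω-club}` on `κ^κ`. -/
def EOmegaClub (κ : Cardinal.{0}) (f g : Ordinal → Ordinal) : Prop :=
  ∃ A : Set Ordinal, IsMuClub κ ℵ₀ A ∧ ∀ α ∈ A, f α = g α

namespace Node

@[ext]
lemma ext {x y : Node} (h : ∀ n, x.1 n = y.1 n) : x = y := Subtype.ext (funext h)

lemma restrict_apply (x : Node) (k m : ℕ) :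
    (x.restrict k).1 m = if m < k then x.1 m else none := rfl

lemma restrict_le (x : Node) (k : ℕ) : le (x.restrict k) x := by
  intro n a h
  rw [restrict_apply] at h
  split_ifs at h
  exact h

lemma restrict_eq_self {x : Node} {k m : ℕ} (hk : x.1 k = none) (hkm : k ≤ m) :
    x.restrict m = x := by
  ext n : 1
  rw [restrict_apply]
  split_ifs with hn
  · rfl
  · by_contra hne
    exact x.2 k n (by omega) (Ne.symm hne) hk

lemma restrict_ne_self {x : Node} (hx : x.full) (k : ℕ) : x.restrict k ≠ x := by
  intro h
  have hk := congrArg (fun z : Node => z.1 k) h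
  simp only [restrict_apply, lt_irrefl, if_false] at hk
  exact hx k hk.symm

lemma restrict_injective {x : Node} (hx : x.full) : Function.Injective x.restrict := by
  refine Function.Injective.of_lt_imp_ne fun m n hmn h => hx m ?_
  have hm := congrArg (fun z : Node => z.1 m) h
  simp only [restrict_apply, lt_irrefl, if_false, hmn, if_true] at hm
  exact hm.symm

lemma eq_or_exists_eq_restrict_of_le {y x : Node} (h : le y x) :
    y = x ∨ ∃ k, y = x.restrict k := by
  by_cases hy : y.full
  · left
    ext n : 1
    obtain ⟨a, ha⟩ := Option.ne_none_iff_exists'.mp (hy n)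
    rw [ha, h n a ha]
  · right
    simp only [full, not_forall, not_not] at hy
    refine ⟨Nat.find hy, ?_⟩
    refine (restrict_eq_self (Nat.find_spec hy) le_rfl).symm.trans ?_
    ext n : 1
    simp only [restrict_apply]
    split_ifs with hn
    · obtain ⟨a, ha⟩ := Option.ne_none_iff_exists'.mp (Nat.find_min hy hn)
      rw [ha, h n a ha]
    · rfl

lemma full_iff_infinite_setOf_le {t : Set Node} (hdc : ∀ x ∈ t, ∀ k, x.restrict k ∈ t)
    {x : Node} (hx : x ∈ t) : x.full ↔ {y | y ∈ t ∧ le y x}.Infinite := by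
  refine ⟨fun hf => Set.infinite_of_injective_forall_mem (restrict_injective hf)
    fun k => ⟨hdc x hx k, restrict_le x k⟩, fun hinf => ?_⟩
  by_contra hnf
  simp only [full, not_forall, not_not] at hnf
  obtain ⟨k, hk⟩ := hnf
  refine hinf (((Set.finite_Iic k).image x.restrict).subset ?_)
  rintro y ⟨-, hyx⟩
  rcases eq_or_exists_eq_restrict_of_le hyx with rfl | ⟨m, rfl⟩
  · exact ⟨k, Set.mem_Iic.2 le_rfl, restrict_eq_self hk le_rfl⟩
  · rcases le_total m k with hm | hm
    · exact ⟨m, hm, rfl⟩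
    · exact ⟨k, Set.mem_Iic.2 le_rfl, by rw [restrict_eq_self hk le_rfl, restrict_eq_self hk hm]⟩

end Node

universe u v

lemma StrictMono.isSuccLimit_ciSup {α : Type*} [ConditionallyCompleteLinearOrder α] {u : ℕ → α}
    (hu : StrictMono u) (hbdd : BddAbove (Set.range u)) : Order.IsSuccLimit (⨆ n, u n) := by
  by_contra hlim
  obtain ⟨n, hn⟩ := exists_eq_ciSup_of_not_isSuccLimit hbdd hlim
  exact (hu n.lt_succ_self).not_ge (hn ▸ le_ciSup hbdd (n + 1))

lemma Ordinal.image_Iio_ord_aleph0 {α : Type*} (s : Ordinal.{v} → α) :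
    s '' Set.Iio (ord ℵ₀) = Set.range fun n : ℕ => s n := by
  ext a
  simp only [Cardinal.ord_aleph0, Set.mem_image, Set.mem_Iio, Ordinal.lt_omega0, Set.mem_range]
  constructor
  · rintro ⟨_, ⟨n, rfl⟩, rfl⟩
    exact ⟨n, rfl⟩
  · rintro ⟨n, rfl⟩
    exact ⟨n, ⟨n, rfl⟩, rfl⟩

lemma Cardinal.IsRegular.iSup_nat_lt_ord {κ : Cardinal.{v}} (hκ : κ.IsRegular) (hκω : ℵ₀ < κ)
    {u : ℕ → Ordinal.{v}} (hu : ∀ n, u n < κ.ord) : ⨆ n, u n < κ.ord :=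
  Ordinal.lift_iSup_lt_of_lt_cof
    (by rwa [Cardinal.mk_nat, Cardinal.lift_aleph0, ← Ordinal.lift_cof, hκ.cof_ord,
      Cardinal.lift_uzero]) hu

structure IsKappaFiltration {X : Type u} (κ : Cardinal.{0}) (S : Set X) (A : Ordinal → Set X) :
    Prop where
  card_lt : ∀ α < κ.ord, #(A α) < Cardinal.lift.{u} κ
  mono : ∀ α β : Ordinal, α < β → β < κ.ord → A α ⊆ A β
  eq_biUnion_of_isSuccLimit :
    ∀ γ < κ.ord, Order.IsSuccLimit γ → A γ = ⋃ (α : Ordinal) (_ : α < γ), A α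
  biUnion_eq : (⋃ (α : Ordinal) (_ : α < κ.ord), A α) = S

lemma IsTreeFiltration.isKappaFiltration {κ : Cardinal.{0}} {t : Set Node} {I : Ordinal → Set Node}
    (h : IsTreeFiltration κ t I) : IsKappaFiltration κ t I :=
  ⟨h.2.2.1, h.2.2.2.1, h.2.2.2.2.1, h.2.2.2.2.2⟩

namespace IsKappaFiltration

variable {X : Type u} {κ : Cardinal.{0}} {S S' : Set X} {A B : Ordinal → Set X}

lemma mono_le (hA : IsKappaFiltration κ S A) {α β : Ordinal} (hαβ : α ≤ β) (hβ : β < κ.ord) :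
    A α ⊆ A β :=
  hαβ.lt_or_eq.elim (fun h => hA.mono α β h hβ) (fun h => h ▸ subset_rfl)

lemma image {Y : Type u} (hA : IsKappaFiltration κ S A) (F : X → Y) :
    IsKappaFiltration κ (F '' S) (fun α => F '' A α) where
  card_lt α hα := Cardinal.mk_image_le.trans_lt (hA.card_lt α hα)
  mono α β hαβ hβ := Set.image_mono (hA.mono α β hαβ hβ)
  eq_biUnion_of_isSuccLimit γ hγ hlim := by
    rw [hA.eq_biUnion_of_isSuccLimit γ hγ hlim, Set.image_iUnion₂]
  biUnion_eq := by rw [← hA.biUnion_eq, Set.image_iUnion₂]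

lemma exists_subset_of_card_lt (hA : IsKappaFiltration κ S A) (hκ : κ.IsRegular) {T : Set X}
    (hTS : T ⊆ S) (hT : #T < Cardinal.lift.{u} κ) : ∃ β < κ.ord, T ⊆ A β := by
  have hstage : ∀ x : T, ∃ α < κ.ord, (x : X) ∈ A α := by
    intro x
    simpa [← hA.biUnion_eq] using hTS x.2
  choose g hgκ hgA using hstage
  have hsup : (⨆ x, g x) < κ.ord :=
    Ordinal.lift_iSup_lt_of_lt_cof
      (by rwa [← Ordinal.lift_cof, hκ.cof_ord, Cardinal.lift_uzero]) hgκ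
  have hbdd : BddAbove (Set.range g) := ⟨κ.ord, Set.forall_mem_range.2 fun x => (hgκ x).le⟩
  exact ⟨⨆ x, g x, hsup, fun x hx => hA.mono_le (le_ciSup hbdd ⟨x, hx⟩) hsup (hgA ⟨x, hx⟩)⟩

lemma subset (hA : IsKappaFiltration κ S A) {α : Ordinal} (hα : α < κ.ord) : A α ⊆ S :=
  hA.biUnion_eq ▸ Set.subset_iUnion₂ (s := fun α (_ : α < κ.ord) => A α) α hα

lemma subset_at_iSup_of_interleave (hA : IsKappaFiltration κ S A)
    (hB : IsKappaFiltration κ S' B) {u : ℕ → Ordinal} (hu : StrictMono u)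
    (hlt : ⨆ n, u n < κ.ord) (hAB : ∀ n, A (u n) ⊆ B (u (n + 1))) :
    A (⨆ n, u n) ⊆ B (⨆ n, u n) := by
  have hbdd : BddAbove (Set.range u) := Ordinal.bddAbove_of_small
  have hu_lt : ∀ n, u n < ⨆ n, u n := fun n =>
    (hu n.lt_succ_self).trans_le (le_ciSup hbdd (n + 1))
  rw [hA.eq_biUnion_of_isSuccLimit _ hlt (hu.isSuccLimit_ciSup hbdd), Set.iUnion₂_subset_iff]
  intro α hα
  obtain ⟨n, hn⟩ := (lt_ciSup_iff hbdd).1 hα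
  exact (hA.mono _ _ hn ((hu_lt n).trans hlt)).trans
    ((hAB n).trans (hB.mono _ _ (hu_lt (n + 1)) hlt))

lemma eq_at_iSup_of_interleave (hA : IsKappaFiltration κ S A)
    (hB : IsKappaFiltration κ S' B) {u : ℕ → Ordinal} (hu : StrictMono u)
    (hlt : ⨆ n, u n < κ.ord) (hAB : ∀ n, A (u n) ⊆ B (u (n + 1)))
    (hBA : ∀ n, B (u n) ⊆ A (u (n + 1))) : A (⨆ n, u n) = B (⨆ n, u n) :=
  (hA.subset_at_iSup_of_interleave hB hu hlt hAB).antisymm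
    (hB.subset_at_iSup_of_interleave hA hu hlt hBA)

lemma exists_interleave (hA : IsKappaFiltration κ S A) (hB : IsKappaFiltration κ S B)
    (hκ : κ.IsRegular) {α : Ordinal} (hα : α < κ.ord) :
    ∃ β < κ.ord, α < β ∧ A α ⊆ B β ∧ B α ⊆ A β := by
  obtain ⟨β₁, hβ₁, hAB⟩ := hB.exists_subset_of_card_lt hκ (hA.subset hα) (hA.card_lt α hα)
  obtain ⟨β₂, hβ₂, hBA⟩ := hA.exists_subset_of_card_lt hκ (hB.subset hα) (hB.card_lt α hα)
  set β := Order.succ (max α (max β₁ β₂))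
  have hβ : β < κ.ord :=
    (Cardinal.isSuccLimit_ord hκ.aleph0_le).succ_lt (max_lt hα (max_lt hβ₁ hβ₂))
  have hle : max α (max β₁ β₂) ≤ β := Order.le_succ _
  refine ⟨β, hβ, (le_max_left _ _).trans_lt (Order.lt_succ _), ?_, ?_⟩
  · exact hAB.trans (hB.mono_le ((le_max_left _ _).trans ((le_max_right _ _).trans hle)) hβ)
  · exact hBA.trans (hA.mono_le ((le_max_right _ _).trans ((le_max_right _ _).trans hle)) hβ)

lemma isMuClub_setOf_eq (hA : IsKappaFiltration κ S A) (hB : IsKappaFiltration κ S B)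
    (hκ : κ.IsRegular) (hκω : ℵ₀ < κ) : IsMuClub κ ℵ₀ {α | α < κ.ord ∧ A α = B α} := by
  refine ⟨fun α hα => hα.1, fun β hβ => ?_, fun s hs hsC => ?_⟩
  · choose! next hnext_lt hlt_next hAB hBA using fun α (hα : α < κ.ord) =>
      hA.exists_interleave hB hκ hα
    set u : ℕ → Ordinal := fun n => next^[n] β
    have hu_succ : ∀ n, u (n + 1) = next (u n) := fun n => Function.iterate_succ_apply' _ _ _
    have hu_lt : ∀ n, u n < κ.ord := fun n => by
      induction n with
      | zero => exact hβ
      | succ n ih => exact hu_succ n ▸ hnext_lt _ ih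
    have hu : StrictMono u := strictMono_nat_of_lt_succ fun n => hu_succ n ▸ hlt_next _ (hu_lt n)
    have hsup := hκ.iSup_nat_lt_ord hκω hu_lt
    refine ⟨⨆ n, u n, ⟨hsup, hA.eq_at_iSup_of_interleave hB hu hsup ?_ ?_⟩, ?_⟩
    · exact fun n => hu_succ n ▸ hAB _ (hu_lt n)
    · exact fun n => hu_succ n ▸ hBA _ (hu_lt n)
    · exact (hu Nat.zero_lt_one).trans_le (le_ciSup Ordinal.bddAbove_of_small 1)
  · have hnat : ∀ n : ℕ, (n : Ordinal) ∈ Set.Iio (ord ℵ₀) := fun n => by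
      simp [Cardinal.ord_aleph0, Ordinal.natCast_lt_omega0]
    have hsC' : ∀ n : ℕ, s n < κ.ord ∧ A (s n) = B (s n) := fun n => hsC n (hnat n)
    have hu : StrictMono fun n : ℕ => s n := fun m n hmn =>
      hs (hnat m) (hnat n) (by exact_mod_cast hmn)
    have hsup := hκ.iSup_nat_lt_ord hκω fun n => (hsC' n).1
    rw [Ordinal.image_Iio_ord_aleph0]
    refine ⟨hsup, hA.eq_at_iSup_of_interleave hB hu hsup (fun n => ?_) (fun n => ?_)⟩
    · exact (hsC' n).2 ▸ hB.mono _ _ (hu n.lt_succ_self) (hsC' (n + 1)).1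
    · exact (hsC' n).2 ▸ hA.mono _ _ (hu n.lt_succ_self) (hsC' (n + 1)).1

end IsKappaFiltration

lemma mem_Bset_iff {t : Set Node} (hdc : ∀ x ∈ t, ∀ k, x.restrict k ∈ t)
    {I : Ordinal → Set Node} {α : Ordinal} {x : Node} :
    x ∈ Bset t I α ↔ x ∈ t ∧ x.full ∧ x ∉ I α ∧ ∀ y ∈ t, Node.le y x → y ≠ x → y ∈ I α := by
  refine and_congr_right fun hx => and_congr_right fun hfull => and_congr_right fun _ => ⟨?_, ?_⟩
  · intro hrestrict y _ hyx hne
    obtain ⟨k, rfl⟩ := (Node.eq_or_exists_eq_restrict_of_le hyx).resolve_left hne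
    exact hrestrict k
  · exact fun h n => h _ (hdc x hx n) (x.restrict_le n) (Node.restrict_ne_self hfull n)

def IsTreeIso (t0 t1 : Set Node) (F : Node → Node) : Prop :=
  Set.BijOn F t0 t1 ∧ ∀ x ∈ t0, ∀ y ∈ t0, (Node.le x y ↔ Node.le (F x) (F y))

namespace IsTreeIso

variable {t0 t1 : Set Node} {F : Node → Node} {x : Node}

lemma image_setOf_le (hF : IsTreeIso t0 t1 F) (hx : x ∈ t0) :
    F '' {y | y ∈ t0 ∧ Node.le y x} = {z | z ∈ t1 ∧ Node.le z (F x)} := by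
  ext z
  constructor
  · rintro ⟨y, ⟨hy, hyx⟩, rfl⟩
    exact ⟨hF.1.mapsTo hy, (hF.2 y hy x hx).1 hyx⟩
  · rintro ⟨hz, hzx⟩
    obtain ⟨y, hy, rfl⟩ := hF.1.surjOn hz
    exact ⟨y, ⟨hy, (hF.2 y hy x hx).2 hzx⟩, rfl⟩

lemma full_iff (hF : IsTreeIso t0 t1 F) (hdc0 : ∀ x ∈ t0, ∀ k, x.restrict k ∈ t0)
    (hdc1 : ∀ x ∈ t1, ∀ k, x.restrict k ∈ t1) (hx : x ∈ t0) : (F x).full ↔ x.full := by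
  rw [Node.full_iff_infinite_setOf_le hdc0 hx,
    Node.full_iff_infinite_setOf_le hdc1 (hF.1.mapsTo hx), ← hF.image_setOf_le hx,
    Set.infinite_image_iff (hF.1.injOn.mono fun y hy => hy.1)]

lemma mem_Bset_iff (hF : IsTreeIso t0 t1 F) (hdc0 : ∀ x ∈ t0, ∀ k, x.restrict k ∈ t0)
    (hdc1 : ∀ x ∈ t1, ∀ k, x.restrict k ∈ t1) {I J : Ordinal → Set Node} {α : Ordinal}
    (hI : I α ⊆ t0) (hIJ : F '' I α = J α) (hx : x ∈ t0) :
    F x ∈ Bset t1 J α ↔ x ∈ Bset t0 I α := by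
  have hmem : ∀ {y}, y ∈ t0 → (F y ∈ J α ↔ y ∈ I α) := fun hy =>
    hIJ ▸ hF.1.injOn.mem_image_iff hI hy
  rw [_root_.mem_Bset_iff hdc1, _root_.mem_Bset_iff hdc0, hF.full_iff hdc0 hdc1 hx, hmem hx]
  refine and_congr (iff_of_true (hF.1.mapsTo hx) hx) (and_congr_right fun _ =>
    and_congr_right fun _ => ⟨fun h y hy hyx hne => ?_, fun h z hz hzx hne => ?_⟩)
  · exact (hmem hy).1 (h _ (hF.1.mapsTo hy) ((hF.2 y hy x hx).1 hyx) (hF.1.injOn.ne hy hx hne))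
  · obtain ⟨y, hy, rfl⟩ := hF.1.surjOn hz
    exact (hmem hy).2 (h y hy ((hF.2 y hy x hx).2 hzx) (ne_of_apply_ne F hne))

lemma image_Bset (hF : IsTreeIso t0 t1 F) (hdc0 : ∀ x ∈ t0, ∀ k, x.restrict k ∈ t0)
    (hdc1 : ∀ x ∈ t1, ∀ k, x.restrict k ∈ t1) {I J : Ordinal → Set Node} {α : Ordinal}
    (hI : I α ⊆ t0) (hIJ : F '' I α = J α) : F '' Bset t0 I α = Bset t1 J α := by
  ext z
  constructor
  · rintro ⟨x, hx, rfl⟩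
    exact (hF.mem_Bset_iff hdc0 hdc1 hI hIJ hx.1).2 hx
  · intro hz
    obtain ⟨x, hx, rfl⟩ := hF.1.surjOn hz.1
    exact ⟨x, (hF.mem_Bset_iff hdc0 hdc1 hI hIJ hx).1 hz, rfl⟩

end IsTreeIso

lemma Hfun_eq_of_mem {t : Set Node} {c : Node → Ordinal} {I : Ordinal → Set Node} {α : Ordinal}
    (hc : ∀ x ∈ Bset t I α, ∀ y ∈ Bset t I α, c x = c y) {x : Node} (hx : x ∈ Bset t I α) :
    Hfun t c I α = c x := by
  rw [Hfun, dif_pos ⟨⟨x, hx⟩, hc⟩]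
  exact hc _ (Exists.choose_spec _) _ hx

lemma Hfun_eq_of_image_Bset_eq {t0 t1 : Set Node} {c0 c1 : Node → Ordinal}
    {I J : Ordinal → Set Node} {α : Ordinal} {F : Node → Node}
    (hB : F '' Bset t0 I α = Bset t1 J α) (hc : ∀ x ∈ Bset t0 I α, c1 (F x) = c0 x) :
    Hfun t0 c0 I α = Hfun t1 c1 J α := by
  have hconst : (∀ x ∈ Bset t0 I α, ∀ y ∈ Bset t0 I α, c0 x = c0 y) ↔
      ∀ z ∈ Bset t1 J α, ∀ w ∈ Bset t1 J α, c1 z = c1 w := by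
    simp +contextual only [← hB, Set.forall_mem_image, hc]
  by_cases h : (Bset t0 I α).Nonempty ∧ ∀ x ∈ Bset t0 I α, ∀ y ∈ Bset t0 I α, c0 x = c0 y
  · obtain ⟨⟨x, hx⟩, hc0⟩ := h
    have hFx : F x ∈ Bset t1 J α := hB ▸ Set.mem_image_of_mem F hx
    rw [Hfun_eq_of_mem hc0 hx, Hfun_eq_of_mem (hconst.1 hc0) hFx, hc x hx]
  · have h' : ¬((Bset t1 J α).Nonempty ∧ ∀ z ∈ Bset t1 J α, ∀ w ∈ Bset t1 J α, c1 z = c1 w) := by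
      rwa [← hconst, ← hB, Set.image_nonempty]
    rw [Hfun, Hfun, dif_neg h, dif_neg h']

theorem good_filtrations_EOmegaClub_general (κ : Cardinal.{0}) (hκ : κ.IsRegular) (hκω : ℵ₀ < κ)
    (t0 t1 : Set Node)
    (hdc0 : ∀ x ∈ t0, ∀ k, x.restrict k ∈ t0) (hdc1 : ∀ x ∈ t1, ∀ k, x.restrict k ∈ t1)
    (c0 c1 : Node → Ordinal)
    (F : Node → Node) (hFbij : Set.BijOn F t0 t1)
    (hFord : ∀ x ∈ t0, ∀ y ∈ t0, (Node.le x y ↔ Node.le (F x) (F y)))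
    (hFcol : ∀ x ∈ t0, x.full → c1 (F x) = c0 x)
    (I J : Ordinal → Set Node)
    (hI : IsGoodFiltration κ t0 c0 I) (hJ : IsGoodFiltration κ t1 c1 J) :
    EOmegaClub κ (Hfun t0 c0 I) (Hfun t1 c1 J) := by
  have hF : IsTreeIso t0 t1 F := ⟨hFbij, hFord⟩
  have hFI : IsKappaFiltration κ t1 fun α => F '' I α :=
    hFbij.image_eq ▸ hI.1.isKappaFiltration.image F
  refine ⟨_, hFI.isMuClub_setOf_eq hJ.1.isKappaFiltration hκ hκω, fun α ⟨hα, hIJ⟩ => ?_⟩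
  exact Hfun_eq_of_image_Bset_eq (hF.image_Bset hdc0 hdc1 (hI.1.1 α hα) hIJ)
    fun x hx => hFcol x hx.1 hx.2.1

/-- If `(t₀,c₀)` and `(t₁,c₁)` are isomorphic coloured trees and `I`, `J` are
good filtrations of `t₀`, `t₁` respectively, then `H_{I,t₀} E^κ_{ω-club} H_{J,t₁}`. -/
theorem good_filtrations_EOmegaClub (κ : Cardinal.{0}) (hκ : κ.IsRegular) (hκω : ℵ₀ < κ)
    (t0 t1 : Set Node)
    (hdc0 : ∀ x ∈ t0, ∀ k, x.restrict k ∈ t0) (hdc1 : ∀ x ∈ t1, ∀ k, x.restrict k ∈ t1)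
    (c0 c1 : Node → Ordinal)
    (hc0 : ∀ x ∈ t0, x.full → c0 x ≠ 0 ∧ c0 x < κ.ord)
    (hc1 : ∀ x ∈ t1, x.full → c1 x ≠ 0 ∧ c1 x < κ.ord)
    (F : Node → Node) (hFbij : Set.BijOn F t0 t1)
    (hFord : ∀ x ∈ t0, ∀ y ∈ t0, (Node.le x y ↔ Node.le (F x) (F y)))
    (hFcol : ∀ x ∈ t0, x.full → c1 (F x) = c0 x)
    (I J : Ordinal → Set Node)
    (hI : IsGoodFiltration κ t0 c0 I) (hJ : IsGoodFiltration κ t1 c1 J) :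
    EOmegaClub κ (Hfun t0 c0 I) (Hfun t1 c1 J) :=
  good_filtrations_EOmegaClub_general κ hκ hκω t0 t1 hdc0 hdc1 c0 c1 F hFbij hFord hFcol I J hI hJ
end

section
/- Let T be a complete first-order theory in a countable vocabulary, κ regular uncountable with κ^{<κ} = κ, and let A, B be structures with domain κ. Then player II has a winning strategy in the Ehrenfeucht–Fraïssé game EF^κ_ω(A,B) if and only if player II has a winning strategy in the restricted game EF^κ_ω(A↾α, B↾α) for club-many α < κ. -/
open Set Cardinal FirstOrder FirstOrder.Language

variable {L : Language}

/-- A set of pairs `g` is (the graph of) a partial isomorphism between the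
structures `A` and `B`: it is functional, injective, and preserves all
relations in both directions. -/
def IsPartialIso (A B : L.Structure Ordinal.{0}) (g : Set (Ordinal × Ordinal)) : Prop :=
  (∀ p ∈ g, ∀ q ∈ g, p.1 = q.1 → p.2 = q.2) ∧
  (∀ p ∈ g, ∀ q ∈ g, p.2 = q.2 → p.1 = q.1) ∧
  ∀ (n : ℕ) (R : L.Relations n) (v : Fin n → Ordinal × Ordinal), (∀ i, v i ∈ g) →
    (A.RelMap R (fun i => (v i).1) ↔ B.RelMap R (fun i => (v i).2))

/-- The moves of player I up to round `n` (as a list). -/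
def histMoves (β : ℕ → Ordinal) (n : ℕ) : List Ordinal := (List.range (n + 1)).map β

/-- Legality of I's move at round `n` in the (unrestricted) game `EF^κ_ω`:
moves are ordinals `< κ` and the chosen sets `X_{β_n}` strictly increase. -/
def ILegalAt (κo : Ordinal) (X : Ordinal → Set Ordinal) (β : ℕ → Ordinal) (n : ℕ) : Prop :=
  β n < κo ∧ (n = 0 → (X (β 0)).Nonempty) ∧ ∀ m, n = m + 1 → X (β m) ⊂ X (β n)

/-- Legality of II's move at round `n` in the (unrestricted) game `EF^κ_ω`:
the chosen partial functions `f_{θ_n}` strictly increase and cover `X_{β_n}`. -/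
def IILegalAt (κo : Ordinal) (X : Ordinal → Set Ordinal)
    (Fp : Ordinal → Set (Ordinal × Ordinal)) (β θ : ℕ → Ordinal) (n : ℕ) : Prop :=
  θ n < κo ∧ X (β n) ⊆ Prod.fst '' Fp (θ n) ∧ X (β n) ⊆ Prod.snd '' Fp (θ n) ∧
    ∀ m, n = m + 1 → Fp (θ m) ⊂ Fp (θ n)

/-- `σ` is a winning strategy for player II in `EF^κ_ω(A,B)`. -/
def IsWinFull (A B : L.Structure Ordinal) (κo : Ordinal) (X : Ordinal → Set Ordinal)
    (Fp : Ordinal → Set (Ordinal × Ordinal)) (σ : List Ordinal → Ordinal) : Prop :=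
  ∀ β : ℕ → Ordinal, (∀ n, ILegalAt κo X β n) →
    (∀ n, IILegalAt κo X Fp β (fun k => σ (histMoves β k)) n) ∧
    IsPartialIso A B (⋃ n, Fp (σ (histMoves β n)))

/-- Legality of I's move at round `n` in the restricted game
`EF^κ_ω(A↾α, B↾α)` : everything lives below `α`. -/
def ILegalResAt (α : Ordinal) (X : Ordinal → Set Ordinal) (β : ℕ → Ordinal) (n : ℕ) : Prop :=
  β n < α ∧ X (β n) ⊆ Set.Iio α ∧ ∀ m, n = m + 1 → X (β m) ⊆ X (β n)

/-- Legality of II's move at round `n` in the restricted game. -/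
def IILegalResAt (α : Ordinal) (X : Ordinal → Set Ordinal)
    (Fp : Ordinal → Set (Ordinal × Ordinal)) (β θ : ℕ → Ordinal) (n : ℕ) : Prop :=
  θ n < α ∧ Fp (θ n) ⊆ (Set.Iio α) ×ˢ (Set.Iio α) ∧
    X (β n) ⊆ Prod.fst '' Fp (θ n) ∧ X (β n) ⊆ Prod.snd '' Fp (θ n) ∧
    ∀ m, n = m + 1 → Fp (θ m) ⊆ Fp (θ n)

/-- `σ` is a winning strategy for player II in the restricted game
`EF^κ_ω(A↾α, B↾α)`. -/
def IsWinRes (A B : L.Structure Ordinal) (α : Ordinal) (X : Ordinal → Set Ordinal)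
    (Fp : Ordinal → Set (Ordinal × Ordinal)) (σ : List Ordinal → Ordinal) : Prop :=
  ∀ β : ℕ → Ordinal, (∀ n, ILegalResAt α X β n) →
    (∀ n, IILegalResAt α X Fp β (fun k => σ (histMoves β k)) n) ∧
    IsPartialIso A B (⋃ n, Fp (σ (histMoves β n)))

/-- `C ⊆ κ` is club in `κ`. -/
def IsClubIn (κ : Cardinal.{0}) (C : Set Ordinal.{0}) : Prop :=
  C ⊆ Set.Iio κ.ord ∧
  (∀ β < κ.ord, ∃ α ∈ C, β < α) ∧
  ∀ B ⊆ C, B.Nonempty → sSup B < κ.ord → sSup B ∈ C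

/-- The enumerations `(X_γ)_{γ<κ}` of `P_κ(κ)` and `(f_γ)_{γ<κ}` of all partial
functions with small domain and range are adequate. -/
def GoodEnum (κ : Cardinal.{0}) (X : Ordinal → Set Ordinal)
    (Fp : Ordinal → Set (Ordinal × Ordinal)) : Prop :=
  (∀ γ < κ.ord, X γ ⊆ Set.Iio κ.ord ∧ #(X γ) < Cardinal.lift.{1} κ) ∧
  (∀ s : Set Ordinal, s ⊆ Set.Iio κ.ord → #s < Cardinal.lift.{1} κ →
    ∃ γ < κ.ord, X γ = s) ∧
  (∀ γ < κ.ord, Fp γ ⊆ (Set.Iio κ.ord) ×ˢ (Set.Iio κ.ord) ∧ #(Fp γ) < Cardinal.lift.{1} κ ∧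
    ∀ p ∈ Fp γ, ∀ q ∈ Fp γ, p.1 = q.1 → p.2 = q.2) ∧
  (∀ g : Set (Ordinal × Ordinal), g ⊆ (Set.Iio κ.ord) ×ˢ (Set.Iio κ.ord) →
    #g < Cardinal.lift.{1} κ → (∀ p ∈ g, ∀ q ∈ g, p.1 = q.1 → p.2 = q.2) →
    ∃ γ < κ.ord, Fp γ = g)

/-!
II's strategies in both games are compared through an auxiliary game in which I plays as in
`EF^κ_ω`, while II only has to answer by partial isomorphisms that cover I's set and weakly extend
her previous answer; she loses as soon as she has no answer. A winning strategy in `EF^κ_ω`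
survives this game, and a surviving strategy wins `EF^κ_ω` once each move of I is enlarged by a
point outside the domain of II's last answer, which forces her answers to grow strictly.

If II survives, her strategy, fed with the restricted play stripped of the moves that do not
enlarge I's set, wins the restricted game at every `α < κ` closed under it, and these `α` form a
club. If II does not survive then, the auxiliary game being closed for her, I has a well-founded
winning strategy. At an `α` in the given club that is closed under I's moves of minimal rank, I
plays these moves against a winning strategy of II in the restricted game at `α`, and the ranks
decrease forever.
-/

section RegularCardinal

variable {κ : Cardinal.{0}}

def IsSmallBelow (κ : Cardinal.{0}) (s : Set Ordinal.{0}) : Prop :=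
  s ⊆ Iio κ.ord ∧ #s < Cardinal.lift.{1} κ

theorem IsSmallBelow.union (hκ : ℵ₀ ≤ κ) {s t : Set Ordinal} (hs : IsSmallBelow κ s)
    (ht : IsSmallBelow κ t) : IsSmallBelow κ (s ∪ t) :=
  ⟨union_subset hs.1 ht.1, (mk_union_le s t).trans_lt
    (add_lt_of_lt (by simpa using hκ) hs.2 ht.2)⟩

theorem isSmallBelow_singleton (hκ : ℵ₀ ≤ κ) {x : Ordinal} (hx : x < κ.ord) :
    IsSmallBelow κ {x} :=
  ⟨singleton_subset_iff.2 hx, by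
    rw [mk_singleton]; exact one_lt_aleph0.trans_le (by simpa using hκ)⟩

theorem IsSmallBelow.insert (hκ : ℵ₀ ≤ κ) {s : Set Ordinal} {x : Ordinal} (hx : x < κ.ord)
    (hs : IsSmallBelow κ s) : IsSmallBelow κ (insert x s) := by
  rw [insert_eq]; exact (isSmallBelow_singleton hκ hx).union hκ hs

theorem Cardinal.IsRegular.sSup_lt_ord (hκ : κ.IsRegular) {s : Set Ordinal}
    (hs : IsSmallBelow κ s) : sSup s < κ.ord :=
  Ordinal.sSup_lt_of_lt_cof (by rw [← Ordinal.lift_cof, hκ.cof_ord]; exact hs.2) hs.1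

theorem exists_lt_ord_notMem {s : Set Ordinal} (hs : #s < Cardinal.lift.{1} κ) :
    ∃ x < κ.ord, x ∉ s := by
  by_contra! h
  have := mk_le_mk_of_subset (s := Iio κ.ord) h
  rw [Cardinal.mk_Iio_ordinal, card_ord] at this
  exact this.not_gt hs

noncomputable def supBelow (κ : Cardinal.{0}) (s : Set Ordinal.{0}) : Ordinal.{0} :=
  open Classical in if IsSmallBelow κ s then sSup ((· + 1) '' s) else 0

theorem supBelow_lt_ord (hκ : κ.IsRegular) (s : Set Ordinal) : supBelow κ s < κ.ord := by
  unfold supBelow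
  split_ifs with hs
  · refine hκ.sSup_lt_ord ⟨?_, mk_image_le.trans_lt hs.2⟩
    rintro _ ⟨x, hx, rfl⟩
    exact (isSuccLimit_ord hκ.aleph0_le).add_one_lt (hs.1 hx)
  · exact (isSuccLimit_ord hκ.aleph0_le).bot_lt

theorem lt_supBelow {s : Set Ordinal} (hs : IsSmallBelow κ s) {x : Ordinal} (hx : x ∈ s) :
    x < supBelow κ s := by
  rw [supBelow, if_pos hs]
  exact (Order.lt_add_one_iff.2 le_rfl).trans_le
    (le_csSup ⟨κ.ord, by rintro _ ⟨y, hy, rfl⟩; exact Order.add_one_le_of_lt (hs.1 hy)⟩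
      (mem_image_of_mem _ hx))

theorem mk_listsBelow_lt (hκω : ℵ₀ < κ) {δ : Ordinal} (hδ : δ < κ.ord) :
    #{l : List Ordinal | ∀ x ∈ l, x < δ} < Cardinal.lift.{1} κ := by
  have : {l : List Ordinal | ∀ x ∈ l, x < δ} = range (List.map ((↑) : Iio δ → Ordinal)) :=
    (range_list_map_coe (Iio δ)).symm
  rw [this]
  refine mk_range_le.trans_lt ((mk_list_le_max _).trans_lt (max_lt (by simpa using hκω) ?_))
  rw [Cardinal.mk_Iio_ordinal, Cardinal.lift_lt]
  exact lt_ord.1 hδ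

end RegularCardinal

section Clubs

variable {κ : Cardinal.{0}}

def IsClosurePoint (G : List Ordinal.{0} → Ordinal.{0}) (α : Ordinal.{0}) : Prop :=
  ∀ l : List Ordinal, (∀ x ∈ l, x < α) → G l < α

theorem exists_mem_forall_lt_of_forall_lt_sSup {S : Set Ordinal} (hS : S.Nonempty) :
    ∀ {l : List Ordinal}, (∀ x ∈ l, x < sSup S) → ∃ b ∈ S, ∀ x ∈ l, x < b
  | [], _ => hS.imp fun _ hb => ⟨hb, by simp⟩
  | a :: l, h => by
    obtain ⟨b, hb, hlb⟩ :=
      exists_mem_forall_lt_of_forall_lt_sSup hS fun x hx => h x (List.mem_cons_of_mem a hx)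
    obtain ⟨c, hc, hac⟩ := exists_lt_of_lt_csSup hS (h a List.mem_cons_self)
    refine ⟨max b c, by rcases max_choice b c with h | h <;> rwa [h], ?_⟩
    simp only [List.mem_cons, forall_eq_or_imp, lt_max_iff]
    exact ⟨Or.inr hac, fun x hx => Or.inl (hlb x hx)⟩

theorem isClubIn_Iio_ord (hκ : ℵ₀ ≤ κ) : IsClubIn κ (Iio κ.ord) :=
  ⟨subset_rfl, fun β hβ => ⟨β + 1, (isSuccLimit_ord hκ).add_one_lt hβ,
    Order.lt_add_one_iff.2 le_rfl⟩, fun _ _ _ h => h⟩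

theorem IsClubIn.exists_isClosurePoint (hκ : κ.IsRegular) (hκω : ℵ₀ < κ) {C : Set Ordinal}
    (hC : IsClubIn κ C) {G : List Ordinal → Ordinal} (hG : ∀ l, G l < κ.ord) {β : Ordinal}
    (hβ : β < κ.ord) : ∃ α ∈ C, β < α ∧ IsClosurePoint G α := by
  have step : ∀ δ : Iio κ.ord, ∃ γ : Iio κ.ord,
      γ.1 ∈ C ∧ δ.1 < γ.1 ∧ ∀ l : List Ordinal, (∀ x ∈ l, x < δ.1) → G l < γ.1 := by
    rintro ⟨δ, hδ⟩
    have hsmall : IsSmallBelow κ (G '' {l | ∀ x ∈ l, x < δ}) :=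
      ⟨image_subset_iff.2 fun l _ => hG l, mk_image_le.trans_lt (mk_listsBelow_lt hκω hδ)⟩
    obtain ⟨γ, hγC, hγ⟩ := hC.2.1 _ (max_lt hδ (supBelow_lt_ord hκ _))
    exact ⟨⟨γ, hC.1 hγC⟩, hγC, (le_max_left _ _).trans_lt hγ, fun l hl =>
      ((lt_supBelow hsmall (mem_image_of_mem G hl)).trans_le (le_max_right _ _)).trans hγ⟩
  choose next hnext using step
  let v : ℕ → Iio κ.ord := fun n => next^[n + 1] ⟨β, hβ⟩
  have hv : ∀ n, v (n + 1) = next (v n) := fun n => Function.iterate_succ_apply' _ _ _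
  have hbdd : BddAbove (range fun n => (v n).1) := ⟨κ.ord, by rintro _ ⟨n, rfl⟩; exact (v n).2.le⟩
  have hα : sSup (range fun n => (v n).1) < κ.ord := by
    refine hκ.sSup_lt_ord ⟨by rintro _ ⟨n, rfl⟩; exact (v n).2, ?_⟩
    exact (mk_le_aleph0_iff.2 (countable_range _).to_subtype).trans_lt (by simpa using hκω)
  refine ⟨_, hC.2.2 _ (range_subset_iff.2 fun n => ?_) (range_nonempty _) hα, ?_, fun l hl => ?_⟩
  · cases n <;> simp only [hv, v] <;> exact (hnext _).1
  · exact (hnext _).2.1.trans_le (le_csSup hbdd ⟨0, rfl⟩)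
  · obtain ⟨_, ⟨n, rfl⟩, hln⟩ := exists_mem_forall_lt_of_forall_lt_sSup (range_nonempty _) hl
    exact ((hnext (v n)).2.2 l hln).trans_le (le_csSup hbdd ⟨n + 1, by simp only [hv]⟩)

theorem isClubIn_isClosurePoint (hκ : κ.IsRegular) (hκω : ℵ₀ < κ) {G : List Ordinal → Ordinal}
    (hG : ∀ l, G l < κ.ord) : IsClubIn κ {α | α < κ.ord ∧ IsClosurePoint G α} := by
  refine ⟨fun α hα => hα.1, fun β hβ => ?_, fun D hD hne hlt => ⟨hlt, fun l hl => ?_⟩⟩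
  · obtain ⟨α, hακ, hβα, hα⟩ := (isClubIn_Iio_ord hκ.aleph0_le).exists_isClosurePoint hκ hκω hG hβ
    exact ⟨α, ⟨hακ, hα⟩, hβα⟩
  · obtain ⟨b, hb, hlb⟩ := exists_mem_forall_lt_of_forall_lt_sSup hne hl
    exact ((hD hb).2 l hlb).trans_le (le_csSup ⟨κ.ord, fun x hx => (hD hx).1.le⟩ hb)

end Clubs

section PartialIso

variable {A B : L.Structure Ordinal}

theorem IsPartialIso.mono {g g' : Set (Ordinal × Ordinal)} (hg : IsPartialIso A B g)
    (h : g' ⊆ g) : IsPartialIso A B g' :=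
  ⟨fun p hp q hq => hg.1 p (h hp) q (h hq), fun p hp q hq => hg.2.1 p (h hp) q (h hq),
    fun n R v hv => hg.2.2 n R v fun i => h (hv i)⟩

theorem IsPartialIso.iUnion {g : ℕ → Set (Ordinal × Ordinal)} (hmono : Monotone g)
    (hg : ∀ n, IsPartialIso A B (g n)) : IsPartialIso A B (⋃ n, g n) := by
  have common : ∀ {m : ℕ} (v : Fin m → Ordinal × Ordinal), (∀ i, v i ∈ ⋃ n, g n) →
      ∃ N, ∀ i, v i ∈ g N := by
    intro m v hv
    choose k hk using fun i => mem_iUnion.1 (hv i)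
    exact ⟨Finset.univ.sup k, fun i => hmono (Finset.le_sup (Finset.mem_univ i)) (hk i)⟩
  refine ⟨fun p hp q hq => ?_, fun p hp q hq => ?_, fun n R v hv => ?_⟩
  · obtain ⟨N, hN⟩ := common ![p, q] (Fin.forall_fin_two.2 ⟨hp, hq⟩)
    exact (hg N).1 p (hN 0) q (hN 1)
  · obtain ⟨N, hN⟩ := common ![p, q] (Fin.forall_fin_two.2 ⟨hp, hq⟩)
    exact (hg N).2.1 p (hN 0) q (hN 1)
  · obtain ⟨N, hN⟩ := common v hv
    exact (hg N).2.2 n R v hN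

end PartialIso

section Histories

theorem histMoves_succ (β : ℕ → Ordinal) (n : ℕ) :
    histMoves β (n + 1) = histMoves β n ++ [β (n + 1)] := by
  simp [histMoves, List.range_succ]

theorem length_histMoves (β : ℕ → Ordinal) (n : ℕ) : (histMoves β n).length = n + 1 := by
  simp [histMoves]

theorem getLast?_histMoves (β : ℕ → Ordinal) (n : ℕ) : (histMoves β n).getLast? = some (β n) := by
  cases n with
  | zero => rfl
  | succ n => rw [histMoves_succ, List.getLast?_concat]

theorem histMoves_eq_of_forall_getElem {β : ℕ → Ordinal} {h : List Ordinal} (hne : h ≠ [])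
    (hβ : ∀ i (hi : i < h.length), β i = h[i]) : histMoves β (h.length - 1) = h := by
  have : 0 < h.length := List.length_pos_iff.2 hne
  refine List.ext_getElem (by simp [length_histMoves]; omega) fun i _ hi => ?_
  simp [histMoves, hβ i hi]

end Histories

section Legality

variable (κo : Ordinal) (X : Ordinal → Set Ordinal)

/-- `prev` is I's previous move, `none` at the start of the game. -/
def IStep (prev : Option Ordinal) (b : Ordinal) : Prop :=
  b < κo ∧ prev.elim ∅ X ⊂ X b

def IsLegalHist (h : List Ordinal) : Prop :=
  ∀ l b, l ++ [b] <+: h → IStep κo X l.getLast? b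

variable {κo X}

theorem iLegalAt_zero_iff {β : ℕ → Ordinal} : ILegalAt κo X β 0 ↔ IStep κo X none (β 0) := by
  simp [ILegalAt, IStep, empty_ssubset]

theorem iLegalAt_succ_iff {β : ℕ → Ordinal} {n : ℕ} :
    ILegalAt κo X β (n + 1) ↔ IStep κo X (some (β n)) (β (n + 1)) := by
  simp [ILegalAt, IStep]

theorem isLegalHist_nil : IsLegalHist κo X [] := by
  rintro l b ⟨t, h⟩
  simp at h

theorem isLegalHist_append_singleton {l : List Ordinal} {b : Ordinal} :
    IsLegalHist κo X (l ++ [b]) ↔ IsLegalHist κo X l ∧ IStep κo X l.getLast? b := by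
  refine ⟨fun h => ⟨fun l' b' h' => h l' b' (h'.trans (List.prefix_append _ _)),
    h l b (List.prefix_refl _)⟩, fun ⟨hl, hb⟩ l' b' h' => ?_⟩
  rcases List.prefix_concat_iff.1 h' with h' | h'
  · obtain ⟨rfl, h''⟩ := List.append_inj' h' rfl
    cases h''
    exact hb
  · exact hl l' b' h'

theorem isLegalHist_histMoves_iff {β : ℕ → Ordinal} {n : ℕ} :
    IsLegalHist κo X (histMoves β n) ↔ ∀ m < n + 1, ILegalAt κo X β m := by
  induction n with
  | zero =>
    rw [show histMoves β 0 = [] ++ [β 0] from rfl, isLegalHist_append_singleton]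
    simp [isLegalHist_nil, iLegalAt_zero_iff]
  | succ n ih =>
    rw [histMoves_succ, isLegalHist_append_singleton, ih, getLast?_histMoves,
      ← iLegalAt_succ_iff, ← Nat.forall_lt_succ_right]

end Legality

namespace GoodEnum

variable {κ : Cardinal.{0}} {X : Ordinal → Set Ordinal} {Fp : Ordinal → Set (Ordinal × Ordinal)}
  {γ : Ordinal}

theorem isSmallBelow_X (hE : GoodEnum κ X Fp) (hγ : γ < κ.ord) : IsSmallBelow κ (X γ) :=
  hE.1 γ hγ

theorem isSmallBelow_fst (hE : GoodEnum κ X Fp) (hγ : γ < κ.ord) :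
    IsSmallBelow κ (Prod.fst '' Fp γ) :=
  ⟨image_subset_iff.2 fun _ hp => ((hE.2.2.1 γ hγ).1 hp).1,
    mk_image_le.trans_lt (hE.2.2.1 γ hγ).2.1⟩

theorem isSmallBelow_snd (hE : GoodEnum κ X Fp) (hγ : γ < κ.ord) :
    IsSmallBelow κ (Prod.snd '' Fp γ) :=
  ⟨image_subset_iff.2 fun _ hp => ((hE.2.2.1 γ hγ).1 hp).2,
    mk_image_le.trans_lt (hE.2.2.1 γ hγ).2.1⟩

theorem exists_empty (hκ : ℵ₀ ≤ κ) (hE : GoodEnum κ X Fp) : ∃ γ < κ.ord, Fp γ = ∅ :=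
  hE.2.2.2 ∅ (empty_subset _) (by simpa using aleph0_pos.trans_le hκ) (by simp)

theorem exists_superset_not_subset (hκ : ℵ₀ ≤ κ) (hE : GoodEnum κ X Fp) {s u : Set Ordinal}
    (hs : IsSmallBelow κ s) (hu : #u < Cardinal.lift.{1} κ) :
    ∃ c < κ.ord, s ⊆ X c ∧ ¬ X c ⊆ u := by
  obtain ⟨x, hx, hxu⟩ := exists_lt_ord_notMem hu
  obtain ⟨c, hc, hXc⟩ := hE.2.1 _ (hs.insert hκ hx).1 (hs.insert hκ hx).2
  exact ⟨c, hc, hXc ▸ subset_insert x s, fun h => hxu (h (hXc ▸ mem_insert x s))⟩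

end GoodEnum

section AuxiliaryGame

variable (κo : Ordinal) (X : Ordinal → Set Ordinal) (Fp : Ordinal → Set (Ordinal × Ordinal))
  (A B : L.Structure Ordinal)

def IICovers (S : Set Ordinal) (t : Ordinal) : Prop :=
  t < κo ∧ S ⊆ Prod.fst '' Fp t ∧ S ⊆ Prod.snd '' Fp t ∧ IsPartialIso A B (Fp t)

def IIStep (s : Option (Ordinal × Ordinal)) (b t : Ordinal) : Prop :=
  IICovers κo Fp A B (X b) t ∧ ∀ p ∈ s, Fp p.2 ⊆ Fp t

def stateAfter (σ : List Ordinal → Ordinal) (h : List Ordinal) : Option (Ordinal × Ordinal) :=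
  h.getLast?.map fun b => (b, σ h)

def IsSurvivalStrategy (σ : List Ordinal → Ordinal) : Prop :=
  ∀ l b, IsLegalHist κo X (l ++ [b]) → IIStep κo X Fp A B (stateAfter σ l) b (σ (l ++ [b]))

variable {κo X Fp A B} {σ : List Ordinal → Ordinal}

theorem stateAfter_append_singleton (l : List Ordinal) (b : Ordinal) :
    stateAfter σ (l ++ [b]) = some (b, σ (l ++ [b])) := by
  simp [stateAfter]

namespace IsSurvivalStrategy

theorem update_nil (hσ : IsSurvivalStrategy κo X Fp A B σ) (t : Ordinal) :
    IsSurvivalStrategy κo X Fp A B (Function.update σ [] t) := by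
  intro l b hl
  have hstate : stateAfter (Function.update σ [] t) l = stateAfter σ l := by
    rcases List.eq_nil_or_concat' l with rfl | ⟨l, a, rfl⟩
    · rfl
    · simp [stateAfter]
  rw [hstate, Function.update_of_ne (by simp)]
  exact hσ l b hl

theorem covers (hσ : IsSurvivalStrategy κo X Fp A B σ) (hnil : IICovers κo Fp A B ∅ (σ []))
    {h : List Ordinal} (hh : IsLegalHist κo X h) :
    IICovers κo Fp A B (h.getLast?.elim ∅ X) (σ h) := by
  rcases List.eq_nil_or_concat' h with rfl | ⟨l, b, rfl⟩
  · exact hnil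
  · simpa using (hσ l b hh).1

theorem mono (hσ : IsSurvivalStrategy κo X Fp A B σ) (hnil : Fp (σ []) = ∅) {l : List Ordinal}
    {b : Ordinal} (hl : IsLegalHist κo X (l ++ [b])) : Fp (σ l) ⊆ Fp (σ (l ++ [b])) := by
  rcases List.eq_nil_or_concat' l with rfl | ⟨l, a, rfl⟩
  · exact hnil ▸ empty_subset _
  · exact (hσ _ b hl).2 _ (stateAfter_append_singleton l a)

end IsSurvivalStrategy

end AuxiliaryGame

section Extension

variable {κo : Ordinal} {X : Ordinal → Set Ordinal}

def extendBy (next : Ordinal → Ordinal) (h : List Ordinal) : ℕ → Ordinal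
  | 0 => h.getD 0 0
  | n + 1 => h.getD (n + 1) (next (extendBy next h n))

variable {next : Ordinal → Ordinal} {h : List Ordinal}

theorem extendBy_of_lt {n : ℕ} (hn : n < h.length) : extendBy next h n = h[n] := by
  cases n <;> exact List.getD_eq_getElem _ _ hn

theorem extendBy_succ_of_le {n : ℕ} (hn : h.length ≤ n + 1) :
    extendBy next h (n + 1) = next (extendBy next h n) :=
  List.getD_eq_default _ _ hn

theorem histMoves_extendBy (hne : h ≠ []) : histMoves (extendBy next h) (h.length - 1) = h :=
  histMoves_eq_of_forall_getElem hne fun _ hi => extendBy_of_lt hi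

theorem iLegalAt_extendBy (hnext : ∀ b < κo, IStep κo X (some b) (next b)) (hne : h ≠ [])
    (hh : IsLegalHist κo X h) (n : ℕ) : ILegalAt κo X (extendBy next h) n := by
  have hpre : ∀ m < h.length, ILegalAt κo X (extendBy next h) m := by
    have := List.length_pos_iff.2 hne
    rw [← histMoves_extendBy (next := next) hne, isLegalHist_histMoves_iff] at hh
    exact fun m hm => hh m (by omega)
  induction n with
  | zero => exact hpre 0 (List.length_pos_iff.2 hne)
  | succ n ih =>
    by_cases hn : n + 1 < h.length
    · exact hpre _ hn
    · rw [iLegalAt_succ_iff, extendBy_succ_of_le (by omega)]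
      exact hnext _ ih.1

end Extension

theorem IsWinFull.isSurvivalStrategy {κ : Cardinal.{0}} {X : Ordinal → Set Ordinal}
    {Fp : Ordinal → Set (Ordinal × Ordinal)} {A B : L.Structure Ordinal}
    {σ : List Ordinal → Ordinal} (hκ : ℵ₀ ≤ κ) (hE : GoodEnum κ X Fp)
    (hσ : IsWinFull A B κ.ord X Fp σ) : IsSurvivalStrategy κ.ord X Fp A B σ := by
  intro l b hlb
  have hgrow : ∀ a, ∃ a', a < κ.ord → IStep κ.ord X (some a) a' := fun a => by
    by_cases ha : a < κ.ord
    · obtain ⟨c, hc, hsub, hnot⟩ :=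
        hE.exists_superset_not_subset hκ (hE.isSmallBelow_X ha) (hE.isSmallBelow_X ha).2
      exact ⟨c, fun _ => ⟨hc, hsub.ssubset_of_not_subset hnot⟩⟩
    · exact ⟨0, fun h => absurd h ha⟩
  choose next hnext using hgrow
  set β := extendBy next (l ++ [b])
  have hhist : histMoves β l.length = l ++ [b] := by
    simpa using histMoves_extendBy (next := next) (h := l ++ [b]) (by simp)
  have hβl : β l.length = b := by
    simpa [hhist] using (getLast?_histMoves β l.length).symm
  obtain ⟨hII, hiso⟩ := hσ β (iLegalAt_extendBy (fun a ha => hnext a ha) (by simp) hlb)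
  obtain ⟨ht, hfst, hsnd, hmono⟩ := hII l.length
  simp only [hhist, hβl] at ht hfst hsnd hmono
  refine ⟨⟨ht, hfst, hsnd, hiso.mono (subset_iUnion_of_subset l.length (by rw [hhist]))⟩, ?_⟩
  rcases List.eq_nil_or_concat' l with rfl | ⟨l', a, rfl⟩
  · simp [stateAfter]
  · rintro _ hp
    rw [stateAfter_append_singleton, Option.mem_some_iff] at hp
    subst hp
    have hprev : histMoves β l'.length = l' ++ [a] := by
      rw [List.length_append, List.length_singleton, histMoves_succ] at hhist
      exact (List.append_inj' hhist rfl).1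
    have := hmono l'.length (by simp)
    rw [hprev] at this
    exact this.subset

section Forward

variable {X : Ordinal → Set Ordinal}

noncomputable def condenseStep (X : Ordinal → Set Ordinal) (L : List Ordinal) (b : Ordinal) :
    List Ordinal :=
  open Classical in if X b = L.getLast?.elim ∅ X then L else L ++ [b]

noncomputable def condense (X : Ordinal → Set Ordinal) (l : List Ordinal) : List Ordinal :=
  l.foldl (condenseStep X) []

theorem condense_append_singleton (l : List Ordinal) (b : Ordinal) :
    condense X (l ++ [b]) = condenseStep X (condense X l) b := by
  simp [condense]

variable {κo α : Ordinal}

theorem condenseStep_spec (hα : α ≤ κo) {L : List Ordinal} {b : Ordinal}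
    (hL : IsLegalHist κo X L) (hLα : ∀ x ∈ L, x < α) (hb : b < α)
    (hsub : L.getLast?.elim ∅ X ⊆ X b) :
    IsLegalHist κo X (condenseStep X L b) ∧ (∀ x ∈ condenseStep X L b, x < α) ∧
      (condenseStep X L b).getLast?.elim ∅ X = X b := by
  unfold condenseStep
  split_ifs with h
  · exact ⟨hL, hLα, h.symm⟩
  · refine ⟨isLegalHist_append_singleton.2 ⟨hL, hb.trans_le hα, hsub.ssubset_of_ne (Ne.symm h)⟩,
      ?_, by simp⟩
    simpa [or_imp, forall_and] using ⟨hLα, hb⟩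

theorem condense_histMoves (hα : α ≤ κo) {β : ℕ → Ordinal} (hβ : ∀ n, ILegalResAt α X β n)
    (n : ℕ) : IsLegalHist κo X (condense X (histMoves β n)) ∧
      (∀ x ∈ condense X (histMoves β n), x < α) ∧
      (condense X (histMoves β n)).getLast?.elim ∅ X = X (β n) := by
  induction n with
  | zero =>
    rw [show histMoves β 0 = [] ++ [β 0] from rfl, condense_append_singleton]
    exact condenseStep_spec hα isLegalHist_nil (by simp [condense]) (hβ 0).1 (empty_subset _)
  | succ n ih =>
    rw [histMoves_succ, condense_append_singleton]
    exact condenseStep_spec hα ih.1 ih.2.1 (hβ (n + 1)).1 (ih.2.2 ▸ (hβ (n + 1)).2.2 n rfl)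

variable {Fp : Ordinal → Set (Ordinal × Ordinal)} {A B : L.Structure Ordinal}
  {σ : List Ordinal → Ordinal}

theorem IsSurvivalStrategy.isWinRes_condense (hσ : IsSurvivalStrategy κo X Fp A B σ)
    (hnil : IICovers κo Fp A B ∅ (σ [])) (hempty : Fp (σ []) = ∅) (hα : α ≤ κo)
    (hclosed : ∀ L, IsLegalHist κo X L → (∀ x ∈ L, x < α) →
      σ L < α ∧ Fp (σ L) ⊆ Iio α ×ˢ Iio α) :
    IsWinRes A B α X Fp (fun l => σ (condense X l)) := by
  intro β hβ
  have hL := condense_histMoves (κo := κo) hα hβ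
  have hcov : ∀ n, IICovers κo Fp A B (X (β n)) (σ (condense X (histMoves β n))) :=
    fun n => (hL n).2.2 ▸ hσ.covers hnil (hL n).1
  have hmono : ∀ n, Fp (σ (condense X (histMoves β n))) ⊆
      Fp (σ (condense X (histMoves β (n + 1)))) := by
    intro n
    have hleg := (hL (n + 1)).1
    rw [histMoves_succ, condense_append_singleton] at hleg ⊢
    unfold condenseStep at hleg ⊢
    split_ifs at hleg ⊢
    exacts [subset_rfl, hσ.mono hempty hleg]
  refine ⟨fun n => ⟨(hclosed _ (hL n).1 (hL n).2.1).1, (hclosed _ (hL n).1 (hL n).2.1).2,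
    (hcov n).2.1, (hcov n).2.2.1, ?_⟩, IsPartialIso.iUnion (monotone_nat_of_le_succ hmono)
      fun n => (hcov n).2.2.2⟩
  rintro m rfl
  exact hmono m

end Forward

namespace IsSurvivalStrategy

variable {κ : Cardinal.{0}} {X : Ordinal → Set Ordinal} {Fp : Ordinal → Set (Ordinal × Ordinal)}
  {A B : L.Structure Ordinal} {σ : List Ordinal → Ordinal}

theorem exists_empty_at_nil (hκ : ℵ₀ ≤ κ) (hE : GoodEnum κ X Fp)
    (hσ : IsSurvivalStrategy κ.ord X Fp A B σ) :
    ∃ σ', IsSurvivalStrategy κ.ord X Fp A B σ' ∧ IICovers κ.ord Fp A B ∅ (σ' []) ∧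
      Fp (σ' []) = ∅ := by
  obtain ⟨γ, hγ, hFγ⟩ := hE.exists_empty hκ
  obtain ⟨c, hc, -, hXc⟩ := hE.exists_superset_not_subset hκ (s := ∅) (u := ∅)
    ⟨empty_subset _, by simpa using aleph0_pos.trans_le hκ⟩ (by simpa using aleph0_pos.trans_le hκ)
  have hfirst : IsLegalHist κ.ord X ([] ++ [c]) :=
    isLegalHist_append_singleton.2 ⟨isLegalHist_nil, hc, empty_ssubset.2
      (nonempty_iff_ne_empty.2 fun h => hXc h.subset)⟩
  have hiso : IsPartialIso A B ∅ := (hσ [] c hfirst).1.2.2.2.mono (empty_subset _)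
  exact ⟨_, hσ.update_nil γ, by simp [IICovers, hγ, hFγ, hiso], by simp [hFγ]⟩

theorem exists_club_isWinRes (hκ : κ.IsRegular) (hκω : ℵ₀ < κ) (hE : GoodEnum κ X Fp)
    (hσ : IsSurvivalStrategy κ.ord X Fp A B σ) :
    ∃ C, IsClubIn κ C ∧ ∀ α ∈ C, ∃ τ, IsWinRes A B α X Fp τ := by
  obtain ⟨σ, hσ, hnil, hempty⟩ := hσ.exists_empty_at_nil hκ.aleph0_le hE
  let bound : List Ordinal → Set Ordinal := fun l =>
    insert (σ l) (Prod.fst '' Fp (σ l) ∪ Prod.snd '' Fp (σ l))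
  refine ⟨_, isClubIn_isClosurePoint hκ hκω (G := fun l => supBelow κ (bound l))
    fun l => supBelow_lt_ord hκ _, fun α ⟨hακ, hαG⟩ => ⟨_, hσ.isWinRes_condense hnil hempty
      hακ.le fun L hL hLα => ?_⟩⟩
  have hσL := (hσ.covers hnil hL).1
  have hsmall : IsSmallBelow κ (bound L) := ((hE.isSmallBelow_fst hσL).union hκ.aleph0_le
    (hE.isSmallBelow_snd hσL)).insert hκ.aleph0_le hσL
  have hlt : ∀ x ∈ bound L, x < α := fun x hx => (lt_supBelow hsmall hx).trans (hαG L hLα)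
  exact ⟨hlt _ (mem_insert _ _), fun p hp => ⟨hlt _ (Or.inr (Or.inl ⟨p, hp, rfl⟩)),
    hlt _ (Or.inr (Or.inr ⟨p, hp, rfl⟩))⟩⟩

end IsSurvivalStrategy

section IWinTree

variable (κo : Ordinal) (X : Ordinal → Set Ordinal) (Fp : Ordinal → Set (Ordinal × Ordinal))
  (A B : L.Structure Ordinal)

/-- Winning strategies of I in the auxiliary game from state `s`: as II loses only by having no
legal answer, they are well-founded trees. -/
inductive IWinTree : Option (Ordinal × Ordinal) → Type 1
  | intro (s : Option (Ordinal × Ordinal)) (b : Ordinal) : IStep κo X (s.map Prod.fst) b →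
      (∀ t, IIStep κo X Fp A B s b t → IWinTree (some (b, t))) → IWinTree s

variable {κo X Fp A B}

namespace IWinTree

variable {s : Option (Ordinal × Ordinal)}

def move : IWinTree κo X Fp A B s → Ordinal
  | intro _ b _ _ => b

theorem iStep_move : (d : IWinTree κo X Fp A B s) → IStep κo X (s.map Prod.fst) d.move
  | intro _ _ hb _ => hb

def next : (d : IWinTree κo X Fp A B s) → ∀ t, IIStep κo X Fp A B s d.move t →
    IWinTree κo X Fp A B (some (d.move, t))
  | intro _ _ _ k => k

noncomputable def rank : ∀ {s}, IWinTree κo X Fp A B s → Ordinal.{1}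
  | _, intro s b _ k => ⨆ t : {t // IIStep κo X Fp A B s b t}, (k t.1 t.2).rank + 1

theorem rank_next_lt : (d : IWinTree κo X Fp A B s) → ∀ t (ht : IIStep κo X Fp A B s d.move t),
    (d.next t ht).rank < d.rank
  | intro s b _ k, t, ht => by
    change (k t ht).rank < ⨆ t : {t // IIStep κo X Fp A B s b t}, (k t.1 t.2).rank + 1
    exact Ordinal.lt_iSup_add_one (fun t : {t // IIStep κo X Fp A B s b t} => (k t.1 t.2).rank)
      ⟨t, ht⟩

end IWinTree

variable (κo X Fp A B)

noncomputable def minRank (s : Option (Ordinal × Ordinal)) : Ordinal.{1} :=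
  ⨅ d : IWinTree κo X Fp A B s, d.rank

noncomputable def optimalMove (s : Option (Ordinal × Ordinal)) : Ordinal :=
  open Classical in
  if h : ∃ d : IWinTree κo X Fp A B s, d.rank = minRank κo X Fp A B s then h.choose.move else 0

variable {κo X Fp A B}

theorem optimalMove_spec {s : Option (Ordinal × Ordinal)} (h : Nonempty (IWinTree κo X Fp A B s)) :
    IStep κo X (s.map Prod.fst) (optimalMove κo X Fp A B s) ∧
      ∀ t, IIStep κo X Fp A B s (optimalMove κo X Fp A B s) t →
        Nonempty (IWinTree κo X Fp A B (some (optimalMove κo X Fp A B s, t))) ∧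
          minRank κo X Fp A B (some (optimalMove κo X Fp A B s, t)) < minRank κo X Fp A B s := by
  have hex : ∃ d : IWinTree κo X Fp A B s, d.rank = minRank κo X Fp A B s :=
    csInf_mem (range_nonempty _)
  have hmove : optimalMove κo X Fp A B s = hex.choose.move := dif_pos hex
  rw [hmove]
  refine ⟨hex.choose.iStep_move, fun t ht => ⟨⟨hex.choose.next t ht⟩, ?_⟩⟩
  calc minRank κo X Fp A B (some (hex.choose.move, t)) ≤ (hex.choose.next t ht).rank :=
        ciInf_le (OrderBot.bddBelow _) _
    _ < hex.choose.rank := hex.choose.rank_next_lt t ht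
    _ = minRank κo X Fp A B s := hex.choose_spec

end IWinTree

section Safety

variable {κo : Ordinal} {X : Ordinal → Set Ordinal} {Fp : Ordinal → Set (Ordinal × Ordinal)}
  {A B : L.Structure Ordinal}

theorem map_fst_stateAfter (σ : List Ordinal → Ordinal) (l : List Ordinal) :
    (stateAfter σ l).map Prod.fst = l.getLast? := by
  simp [stateAfter, Option.map_map, Function.comp_def]

theorem exists_iiStep_of_isEmpty {s : Option (Ordinal × Ordinal)} {b : Ordinal}
    (hs : IsEmpty (IWinTree κo X Fp A B s)) (hb : IStep κo X (s.map Prod.fst) b) :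
    ∃ t, IIStep κo X Fp A B s b t ∧ IsEmpty (IWinTree κo X Fp A B (some (b, t))) := by
  by_contra! h
  exact hs.false (.intro s b hb fun t ht => Classical.choice (h t ht))

theorem exists_isSurvivalStrategy_of_isEmpty (h : IsEmpty (IWinTree κo X Fp A B none)) :
    ∃ σ, IsSurvivalStrategy κo X Fp A B σ := by
  have hans : ∀ s b, ∃ t, IsEmpty (IWinTree κo X Fp A B s) → IStep κo X (s.map Prod.fst) b →
      IIStep κo X Fp A B s b t ∧ IsEmpty (IWinTree κo X Fp A B (some (b, t))) := fun s b => by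
    by_cases hs : IsEmpty (IWinTree κo X Fp A B s) ∧ IStep κo X (s.map Prod.fst) b
    · exact (exists_iiStep_of_isEmpty hs.1 hs.2).imp fun _ ht _ _ => ht
    · exact ⟨0, fun h1 h2 => absurd ⟨h1, h2⟩ hs⟩
  choose ans hans using hans
  let run : List Ordinal → Option (Ordinal × Ordinal) :=
    List.foldl (fun s b => some (b, ans s b)) none
  let σ : List Ordinal → Ordinal := fun l => ((run l).map Prod.snd).getD 0
  have hrun : ∀ l b, run (l ++ [b]) = some (b, ans (run l) b) := fun l b => by
    simp [run]
  have hstate : ∀ l, stateAfter σ l = run l := fun l => by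
    rcases List.eq_nil_or_concat' l with rfl | ⟨l, b, rfl⟩
    · rfl
    · simp [stateAfter, σ, hrun]
  have hσ : ∀ l b, σ (l ++ [b]) = ans (run l) b := fun l b => by simp [σ, hrun]
  have hinv : ∀ l, IsLegalHist κo X l → IsEmpty (IWinTree κo X Fp A B (run l)) := by
    intro l
    induction l using List.reverseRecOn with
    | nil => exact fun _ => h
    | append_singleton l b ih =>
      intro hl
      obtain ⟨hl, hb⟩ := isLegalHist_append_singleton.1 hl
      rw [← map_fst_stateAfter σ, hstate] at hb
      rw [hrun]
      exact (hans _ _ (ih hl) hb).2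
  refine ⟨σ, fun l b hlb => ?_⟩
  obtain ⟨hl, hb⟩ := isLegalHist_append_singleton.1 hlb
  rw [← map_fst_stateAfter σ, hstate] at hb
  rw [hstate, hσ]
  exact (hans _ _ (hinv l hl) hb).1

end Safety

section Simulation

def replay (f : List Ordinal → Ordinal → Ordinal) (l : List Ordinal) : List Ordinal :=
  l.foldl (fun S b => S ++ [f S b]) []

theorem replay_append_singleton (f : List Ordinal → Ordinal → Ordinal) (l : List Ordinal)
    (b : Ordinal) : replay f (l ++ [b]) = replay f l ++ [f (replay f l) b] := by
  simp [replay]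

variable {κ : Cardinal.{0}} {X : Ordinal → Set Ordinal} {Fp : Ordinal → Set (Ordinal × Ordinal)}
  {A B : L.Structure Ordinal} {σ : List Ordinal → Ordinal}

theorem IsLegalHist.isSmallBelow_getLast (hκ : ℵ₀ ≤ κ) (hE : GoodEnum κ X Fp) {S : List Ordinal}
    (hS : IsLegalHist κ.ord X S) : IsSmallBelow κ (S.getLast?.elim ∅ X) := by
  rcases List.eq_nil_or_concat' S with rfl | ⟨S, a, rfl⟩
  · exact ⟨empty_subset _, by simpa using aleph0_pos.trans_le hκ⟩
  · simpa using hE.isSmallBelow_X (isLegalHist_append_singleton.1 hS).2.1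

theorem IsSurvivalStrategy.isWinFull_replay {κo : Ordinal} (hσ : IsSurvivalStrategy κo X Fp A B σ)
    (hnil : IICovers κo Fp A B ∅ (σ [])) (hempty : Fp (σ []) = ∅)
    {move : List Ordinal → Ordinal → Ordinal}
    (hmove : ∀ {S b}, IsLegalHist κo X S → b < κo → IsLegalHist κo X (S ++ [move S b]) ∧
      X b ⊆ X (move S b) ∧ ¬ X (move S b) ⊆ Prod.fst '' Fp (σ S)) :
    IsWinFull A B κo X Fp (fun l => σ (replay move l)) := by
  intro β hβ
  set S : ℕ → List Ordinal := fun n => replay move (histMoves β n)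
  have hS : ∀ n, S (n + 1) = S n ++ [move (S n) (β (n + 1))] := fun n => by
    simp only [S, histMoves_succ, replay_append_singleton]
  have hinv : ∀ n, IsLegalHist κo X (S n) ∧ X (β n) ⊆ (S n).getLast?.elim ∅ X := by
    intro n
    induction n with
    | zero =>
      have := hmove isLegalHist_nil (hβ 0).1
      exact ⟨this.1, by simpa [S, histMoves, replay] using this.2.1⟩
    | succ n ih =>
      have := hmove ih.1 (hβ (n + 1)).1
      rw [hS]
      exact ⟨this.1, by simpa using this.2.1⟩
  have hcov : ∀ n, IICovers κo Fp A B (X (β n)) (σ (S n)) := fun n =>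
    have h := hσ.covers hnil (hinv n).1
    ⟨h.1, (hinv n).2.trans h.2.1, (hinv n).2.trans h.2.2.1, h.2.2.2⟩
  have hmono : ∀ n, Fp (σ (S n)) ⊆ Fp (σ (S (n + 1))) := fun n => by
    rw [hS]
    exact hσ.mono hempty (hS n ▸ (hinv (n + 1)).1)
  refine ⟨fun n => ⟨(hcov n).1, (hcov n).2.1, (hcov n).2.2.1, ?_⟩,
    IsPartialIso.iUnion (monotone_nat_of_le_succ hmono) fun n => (hcov n).2.2.2⟩
  rintro m rfl
  refine (hmono m).ssubset_of_ne fun heq => (hmove (hinv m).1 (hβ (m + 1)).1).2.2 ?_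
  have := (hσ.covers hnil (hinv (m + 1)).1).2.1
  rw [← heq, hS] at this
  simpa using this

theorem IsSurvivalStrategy.exists_isWinFull (hκ : κ.IsRegular) (hE : GoodEnum κ X Fp)
    (hσ : IsSurvivalStrategy κ.ord X Fp A B σ) : ∃ τ, IsWinFull A B κ.ord X Fp τ := by
  obtain ⟨σ, hσ, hnil, hempty⟩ := hσ.exists_empty_at_nil hκ.aleph0_le hE
  have hmove : ∀ S b, ∃ c, IsSmallBelow κ (S.getLast?.elim ∅ X ∪ X b) → σ S < κ.ord →
      c < κ.ord ∧ S.getLast?.elim ∅ X ∪ X b ⊆ X c ∧ ¬ X c ⊆ Prod.fst '' Fp (σ S) := fun S b => by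
    by_cases h : IsSmallBelow κ (S.getLast?.elim ∅ X ∪ X b) ∧ σ S < κ.ord
    · exact (hE.exists_superset_not_subset hκ.aleph0_le h.1 (hE.isSmallBelow_fst h.2).2).imp
        fun c hc _ _ => hc
    · exact ⟨0, fun h1 h2 => absurd ⟨h1, h2⟩ h⟩
  choose move hmove using hmove
  refine ⟨_, hσ.isWinFull_replay hnil hempty (move := move) fun {S b} hS hb => ?_⟩
  have hcov := hσ.covers hnil hS
  obtain ⟨hc, hsub, hnot⟩ := hmove S b ((hS.isSmallBelow_getLast hκ.aleph0_le hE).union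
    hκ.aleph0_le (hE.isSmallBelow_X hb)) hcov.1
  refine ⟨isLegalHist_append_singleton.2 ⟨hS, hc, (union_subset_iff.1 hsub).1.ssubset_of_ne ?_⟩,
    (union_subset_iff.1 hsub).2, hnot⟩
  rintro heq
  exact hnot (heq ▸ hcov.2.1)

end Simulation

section RestrictedGame

def histOf (F : List Ordinal → Ordinal) : ℕ → List Ordinal
  | 0 => []
  | n + 1 => histOf F n ++ [F (histOf F n)]

def playOf (F : List Ordinal → Ordinal) (n : ℕ) : Ordinal := F (histOf F n)

theorem histOf_eq_map (F : List Ordinal → Ordinal) (n : ℕ) :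
    histOf F n = (List.range n).map (playOf F) := by
  induction n with
  | zero => rfl
  | succ n ih => rw [histOf, List.range_succ, List.map_append, ← ih]; rfl

theorem playOf_eq (F : List Ordinal → Ordinal) (n : ℕ) :
    playOf F n = F ((List.range n).map (playOf F)) := by
  rw [playOf, histOf_eq_map]

variable {α : Ordinal} {X : Ordinal → Set Ordinal}

def IResStep (α : Ordinal) (X : Ordinal → Set Ordinal) (prev : Option Ordinal) (b : Ordinal) :
    Prop :=
  b < α ∧ X b ⊆ Iio α ∧ prev.elim ∅ X ⊆ X b

theorem iLegalResAt_iff {β : ℕ → Ordinal} {n : ℕ} :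
    ILegalResAt α X β n ↔ IResStep α X ((List.range n).map β).getLast? (β n) := by
  cases n with
  | zero => simp [ILegalResAt, IResStep]
  | succ n =>
    rw [show (List.range (n + 1)).map β = histMoves β n from rfl, getLast?_histMoves]
    simp [ILegalResAt, IResStep]

/-- The fallback is never taken in the proof below; it only makes every play legal, so that
`IsWinRes` applies to it. -/
noncomputable def withFallback (α : Ordinal) (X : Ordinal → Set Ordinal)
    (c : List Ordinal → Ordinal) (H : List Ordinal) : Ordinal :=
  open Classical in if IResStep α X H.getLast? (c H) then c H else H.getLastD 0

theorem iLegalResAt_playOf_withFallback {c : List Ordinal → Ordinal}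
    (h0 : IResStep α X none (c [])) (n : ℕ) : ILegalResAt α X (playOf (withFallback α X c)) n := by
  set β := playOf (withFallback α X c)
  induction n with
  | zero =>
    rw [iLegalResAt_iff, show β 0 = c [] from if_pos h0]
    exact h0
  | succ n ih =>
    rw [iLegalResAt_iff] at ih ⊢
    rw [show β (n + 1) = withFallback α X c ((List.range (n + 1)).map β) from playOf_eq _ _,
      withFallback]
    have hlast : ((List.range (n + 1)).map β).getLast? = some (β n) := getLast?_histMoves β n
    split_ifs with h
    · exact h
    · rw [List.getLastD_eq_getLast?, hlast]
      exact ⟨ih.1, ih.2.1, subset_rfl⟩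

end RestrictedGame

section Backward

variable {κ : Cardinal.{0}} {X : Ordinal → Set Ordinal} {Fp : Ordinal → Set (Ordinal × Ordinal)}
  {A B : L.Structure Ordinal}

theorem IsWinRes.iiStep {κo α : Ordinal} {σ : List Ordinal → Ordinal} {β : ℕ → Ordinal}
    (hα : α ≤ κo) (hσ : IsWinRes A B α X Fp σ) (hβ : ∀ n, ILegalResAt α X β n) (n : ℕ) :
    IIStep κo X Fp A B (stateAfter σ ((List.range n).map β)) (β n) (σ (histMoves β n)) := by
  obtain ⟨hII, hiso⟩ := hσ β hβ
  refine ⟨⟨(hII n).1.trans_le hα, (hII n).2.2.1, (hII n).2.2.2.1,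
    hiso.mono (subset_iUnion (fun k => Fp (σ (histMoves β k))) n)⟩, ?_⟩
  cases n with
  | zero => simp [stateAfter]
  | succ n =>
    rw [show (List.range (n + 1)).map β = histMoves β n from rfl, stateAfter, getLast?_histMoves,
      Option.map_some]
    rintro _ hp
    rw [Option.mem_some_iff] at hp
    subst hp
    exact (hII (n + 1)).2.2.2.2 n rfl

theorem IsWinRes.false_of_optimalMove_lt {κo α : Ordinal} {σ : List Ordinal → Ordinal}
    (hα : α ≤ κo) (hσ : IsWinRes A B α X Fp σ) (hI : Nonempty (IWinTree κo X Fp A B none))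
    (hclosed : ∀ s : Option (Ordinal × Ordinal), (∀ p ∈ s, p.1 < α ∧ p.2 < α) →
      Nonempty (IWinTree κo X Fp A B s) →
        optimalMove κo X Fp A B s < α ∧ X (optimalMove κo X Fp A B s) ⊆ Iio α) : False := by
  set χ := optimalMove κo X Fp A B
  have hχ : ∀ s, Nonempty (IWinTree κo X Fp A B s) → IStep κo X (s.map Prod.fst) (χ s) ∧
      ∀ t, IIStep κo X Fp A B s (χ s) t → Nonempty (IWinTree κo X Fp A B (some (χ s, t))) ∧
        minRank κo X Fp A B (some (χ s, t)) < minRank κo X Fp A B s :=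
    fun _ => optimalMove_spec
  have h0 : IResStep α X none (χ (stateAfter σ [])) :=
    ⟨(hclosed none (by simp) hI).1, (hclosed none (by simp) hI).2, empty_subset _⟩
  set β := playOf (withFallback α X fun H => χ (stateAfter σ H))
  have hβ : ∀ n, ILegalResAt α X β n := iLegalResAt_playOf_withFallback h0
  set s : ℕ → Option (Ordinal × Ordinal) := fun n => stateAfter σ ((List.range n).map β)
  have hanswer : ∀ n, IIStep κo X Fp A B (s n) (β n) (σ (histMoves β n)) := hσ.iiStep hα hβ
  have hs : ∀ n, s (n + 1) = some (β n, σ (histMoves β n)) := fun n => by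
    simp only [s, stateAfter, show (List.range (n + 1)).map β = histMoves β n from rfl,
      getLast?_histMoves, Option.map_some]
  have hplay : ∀ n, Nonempty (IWinTree κo X Fp A B (s n)) ∧ β n = χ (s n) := by
    intro n
    induction n with
    | zero => exact ⟨hI, if_pos h0⟩
    | succ n ih =>
      obtain ⟨hne, hβn⟩ := ih
      have hne' := ((hχ _ hne).2 _ (by rw [← hβn]; exact hanswer n)).1
      rw [← hβn, ← hs] at hne'
      have hnext := (hχ _ hne').1
      rw [hs] at hne' hnext
      obtain ⟨hχα, hXα⟩ := hclosed _ (by simp [(hβ n).1, ((hσ β hβ).1 n).1]) hne'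
      refine ⟨hs n ▸ hne', ?_⟩
      rw [show β (n + 1) = _ from playOf_eq _ _, withFallback, if_pos]
      rw [show (List.range (n + 1)).map β = histMoves β n from rfl, getLast?_histMoves,
        show stateAfter σ (histMoves β n) = _ from hs n]
      exact ⟨hχα, hXα, hnext.2.subset⟩
  refine not_strictAnti_of_wellFoundedLT (fun n => minRank κo X Fp A B (s n))
    (strictAnti_nat_of_succ_lt fun n => ?_)
  have := ((hχ _ (hplay n).1).2 _ (by rw [← (hplay n).2]; exact hanswer n)).2
  rwa [← (hplay n).2, ← hs] at this

theorem not_forall_isWinRes_of_nonempty (hκ : κ.IsRegular) (hκω : ℵ₀ < κ) (hE : GoodEnum κ X Fp)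
    (hI : Nonempty (IWinTree κ.ord X Fp A B none)) {C : Set Ordinal} (hC : IsClubIn κ C) :
    ¬ ∀ α ∈ C, ∃ σ, IsWinRes A B α X Fp σ := by
  intro hwin
  set χ := optimalMove κ.ord X Fp A B
  let state : List Ordinal → Option (Ordinal × Ordinal) := fun
    | [b, t] => some (b, t)
    | _ => none
  let reach : List Ordinal → Set Ordinal := fun l => insert (χ (state l)) (X (χ (state l)))
  obtain ⟨α, hαC, -, hαG⟩ := hC.exists_isClosurePoint hκ hκω (G := fun l => supBelow κ (reach l))
    (fun l => supBelow_lt_ord hκ _) (isSuccLimit_ord hκ.aleph0_le).bot_lt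
  obtain ⟨σ, hσ⟩ := hwin α hαC
  have hreach : ∀ l, (∀ x ∈ l, x < α) → Nonempty (IWinTree κ.ord X Fp A B (state l)) →
      χ (state l) < α ∧ X (χ (state l)) ⊆ Iio α := fun l hl hne => by
    have hχκ := (optimalMove_spec hne).1.1
    have hsmall : IsSmallBelow κ (reach l) := (hE.isSmallBelow_X hχκ).insert hκ.aleph0_le hχκ
    have hlt : ∀ x ∈ reach l, x < α := fun x hx => (lt_supBelow hsmall hx).trans (hαG l hl)
    exact ⟨hlt _ (mem_insert _ _), fun x hx => hlt x (mem_insert_of_mem _ hx)⟩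
  refine hσ.false_of_optimalMove_lt (hC.1 hαC).le hI fun s hs hne => ?_
  rcases s with _ | ⟨b, t⟩
  · exact hreach [] (by simp) hne
  · exact hreach [b, t] (by simpa using hs) hne

end Backward

theorem II_wins_iff_club_many_general (κ : Cardinal.{0}) (hκ : κ.IsRegular) (hκω : ℵ₀ < κ)
    (L : Language)
    (A B : L.Structure Ordinal)
    (X : Ordinal → Set Ordinal) (Fp : Ordinal → Set (Ordinal × Ordinal))
    (hEnum : GoodEnum κ X Fp) :
    (∃ σ, IsWinFull A B κ.ord X Fp σ) ↔
      ∃ C : Set Ordinal, IsClubIn κ C ∧ ∀ α ∈ C, ∃ σ, IsWinRes A B α X Fp σ := by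
  constructor
  · rintro ⟨σ, hσ⟩
    exact (hσ.isSurvivalStrategy hκ.aleph0_le hEnum).exists_club_isWinRes hκ hκω hEnum
  · rintro ⟨C, hC, hwin⟩
    have hII : IsEmpty (IWinTree κ.ord X Fp A B none) :=
      not_nonempty_iff.1 fun hI => not_forall_isWinRes_of_nonempty hκ hκω hEnum hI hC hwin
    obtain ⟨σ, hσ⟩ := exists_isSurvivalStrategy_of_isEmpty hII
    exact hσ.exists_isWinFull hκ hEnum

/-- For a complete first-order theory `T` in a countable relational vocabulary
and structures `A`, `B` with domain `κ` (`κ` regular uncountable with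
`κ^{<κ} = κ`): player II has a winning strategy in `EF^κ_ω(A,B)` iff player II
has a winning strategy in `EF^κ_ω(A↾α, B↾α)` for club-many `α < κ`. -/
theorem II_wins_iff_club_many (κ : Cardinal.{0}) (hκ : κ.IsRegular) (hκω : ℵ₀ < κ)
    (hκpow : ∀ lam < κ, ℵ₀ ≤ lam → κ ^ lam = κ)
    (L : Language) [Countable (Σ n, L.Relations n)] (hrel : ∀ n, IsEmpty (L.Functions n))
    (T : L.Theory) (hT : T.IsComplete)
    (A B : L.Structure Ordinal)
    (X : Ordinal → Set Ordinal) (Fp : Ordinal → Set (Ordinal × Ordinal))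
    (hEnum : GoodEnum κ X Fp) :
    (∃ σ, IsWinFull A B κ.ord X Fp σ) ↔
      ∃ C : Set Ordinal, IsClubIn κ C ∧ ∀ α ∈ C, ∃ σ, IsWinRes A B α X Fp σ :=
  II_wins_iff_club_many_general κ hκ hκω L A B X Fp hEnum
end
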